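/- arXiv:1810.10767 — 6 statements merged into one kernel-verified Lean document; each statement's English description precedes it below -/
import Mathlib

section
/- Let M = (M_k) be a regular weight sequence with M_k^{1/k} strictly increasing, let n ≥ 2, let B > 0, let (a_ℓ)_{ℓ≥1} be a bounded sequence of points of ℝⁿ, and set a := 1 + sup_ℓ |a_ℓ|. Let K ⊆ ℝⁿ be a compact set avoiding all a_ℓ and suppose k₀ ∈ ℕ is such that dist(a_k, K) ≥ M_k^{−1/(4k)} for all k > k₀. Then there exist ρ > 0 and C > 0, depending only on M, n, B, a, K, k₀ (and not on the data below), with the following property: for every choice of constants c_ℓ ≥ M_ℓ (ℓ ≥ 1), defining M^{(ℓ)}_k := 1 for 0 ≤ k < ℓ and M^{(ℓ)}_k := c_ℓ^{2k−2ℓ+1} M_k for k ≥ ℓ, and for every choice of functions f_ℓ ∈ C^∞(ℝⁿ) satisfying |∂^α f_ℓ(x)| ≤ B^{|α|}(|K'|+a)^{|α|} |α|! M^{(ℓ)}_{|α|} for all compact K' ⊆ ℝⁿ, x ∈ K', α ∈ ℕⁿ, and |∂^α f_ℓ(x)| ≤ B^{|α|}(|K'|+a)^{|α|} |α|! (1 +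 |x − a_ℓ|^{−2(|α|+1)}) for all x ∈ K' \ {a_ℓ}, the function f := ∑_{ℓ=1}^∞ 2^{−ℓ} f_ℓ satisfies ‖f‖^M_{K,ρ} ≤ C. -/
open Filter Metric Set Asymptotics
open scoped BigOperators Topology NNReal

noncomputable section

/-- ℝⁿ with the Euclidean norm. -/
abbrev Euc (n : ℕ) := EuclideanSpace ℝ (Fin n)

/-- First-order partial derivative in the `i`-th coordinate direction. -/
def pder {n : ℕ} (i : Fin n) (f : Euc n → ℝ) : Euc n → ℝ :=
  fun x => fderiv ℝ f x (EuclideanSpace.single i 1)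

/-- The multi-index partial derivative `∂^α f`. -/
def pderM {n : ℕ} (α : Fin n → ℕ) (f : Euc n → ℝ) : Euc n → ℝ :=
  (List.finRange n).foldr (fun i g => (pder i)^[α i] g) f

/-- `|α| = ∑ i, α i`. -/
def mdeg {n : ℕ} (α : Fin n → ℕ) : ℕ := ∑ i, α i

/-- `‖f‖^M_{K,ρ} ≤ C`, spelled out:
`|∂^α f(x)| ≤ C ρ^{|α|} |α|! M_{|α|}` for all `x ∈ K` and multi-indices `α`. -/
def DCBound {n : ℕ} (M : ℕ → ℝ) (f : Euc n → ℝ) (K : Set (Euc n)) (ρ C : ℝ) : Prop :=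
  ∀ x ∈ K, ∀ α : Fin n → ℕ,
    |pderM α f x| ≤ C * ρ ^ mdeg α * (mdeg α).factorial * M (mdeg α)

/-- `‖f‖^M_{K,ρ} < ∞`. -/
def DCFinite {n : ℕ} (M : ℕ → ℝ) (f : Euc n → ℝ) (K : Set (Euc n)) (ρ : ℝ) : Prop :=
  ∃ C : ℝ, DCBound M f K ρ C

/-- The Denjoy–Carleman class of Roumieu type `E^{M}(U)`. -/
def Roumieu {n : ℕ} (M : ℕ → ℝ) (U : Set (Euc n)) (f : Euc n → ℝ) : Prop :=
  ContDiffOn ℝ (⊤ : ℕ∞) f U ∧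
  ∀ K : Set (Euc n), K ⊆ U → IsCompact K → ∃ ρ > 0, DCFinite M f K ρ

/-- The Denjoy–Carleman class of Beurling type `E^{(M)}(U)`. -/
def Beurling {n : ℕ} (M : ℕ → ℝ) (U : Set (Euc n)) (f : Euc n → ℝ) : Prop :=
  ContDiffOn ℝ (⊤ : ℕ∞) f U ∧
  ∀ K : Set (Euc n), K ⊆ U → IsCompact K → ∀ ρ > 0, DCFinite M f K ρ

/-- A regular weight sequence. -/
def RegularWeightSeq (M : ℕ → ℝ) : Prop :=
  (∀ k, 0 < M k) ∧
  (∀ k : ℕ, 1 ≤ k → (M k) ^ 2 ≤ M (k - 1) * M (k + 1)) ∧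
  M 0 = 1 ∧ 1 ≤ M 1 ∧
  Tendsto (fun k : ℕ => (M k) ^ ((k : ℝ)⁻¹)) atTop atTop

/-- Quasianalyticity of a weight sequence: `∑ M_k/((k+1) M_{k+1}) = ∞`. -/
def QAseq (M : ℕ → ℝ) : Prop :=
  ¬ Summable (fun k : ℕ => M k / ((k + 1) * M (k + 1)))

/-- `p : V → ℝⁿ` is an `E^{M}`-plot (Roumieu type): `V` is open and all
component functions of `p` belong to `E^{M}(V)`. -/
def RoumieuPlot {m n : ℕ} (M : ℕ → ℝ) (V : Set (Euc m)) (p : Euc m → Euc n) : Prop :=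
  IsOpen V ∧ ∀ j : Fin n, Roumieu M V (fun x => p x j)

/-- `p : V → ℝⁿ` is an `E^{(M)}`-plot (Beurling type). -/
def BeurlingPlot {m n : ℕ} (M : ℕ → ℝ) (V : Set (Euc m)) (p : Euc m → Euc n) : Prop :=
  IsOpen V ∧ ∀ j : Fin n, Beurling M V (fun x => p x j)

/-- `φ(t) = ω(e^t)`. -/
def youngPhi (ω : ℝ → ℝ) (t : ℝ) : ℝ := ω (Real.exp t)

/-- The Young conjugate `φ*(t) = sup_{s ≥ 0} (st - φ(s))`. -/
def youngStar (ω : ℝ → ℝ) (t : ℝ) : ℝ := ⨆ s : Ici (0 : ℝ), ((s : ℝ) * t - youngPhi ω s)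

/-- A weight function in the sense of Braun–Meise–Taylor. -/
def WeightFunction (ω : ℝ → ℝ) : Prop :=
  ContinuousOn ω (Ici 0) ∧ MonotoneOn ω (Ici 0) ∧ ω 0 = 0 ∧
  Tendsto ω atTop atTop ∧
  ((fun t => ω (2 * t)) =O[atTop] ω) ∧
  (ω =O[atTop] fun t => t) ∧
  (Real.log =o[atTop] ω) ∧
  ConvexOn ℝ univ (youngPhi ω)

/-- Quasianalyticity of a weight function: `∫_0^∞ ω(t)/(1+t²) dt = ∞`. -/
def QAweight (ω : ℝ → ℝ) : Prop :=
  ¬ MeasureTheory.IntegrableOn (fun t => ω t / (1 + t ^ 2)) (Ioi 0)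

/-- `‖f‖^ω_{K,ρ} ≤ C`. -/
def OmBound {n : ℕ} (ω : ℝ → ℝ) (f : Euc n → ℝ) (K : Set (Euc n)) (ρ C : ℝ) : Prop :=
  ∀ x ∈ K, ∀ α : Fin n → ℕ,
    |pderM α f x| ≤ C * Real.exp ((1 / ρ) * youngStar ω (ρ * (mdeg α : ℝ)))

/-- `‖f‖^ω_{K,ρ} < ∞`. -/
def OmFinite {n : ℕ} (ω : ℝ → ℝ) (f : Euc n → ℝ) (K : Set (Euc n)) (ρ : ℝ) : Prop :=
  ∃ C : ℝ, OmBound ω f K ρ C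

/-- The Braun–Meise–Taylor class of Roumieu type `E^{ω}(U)`. -/
def RoumieuW {n : ℕ} (ω : ℝ → ℝ) (U : Set (Euc n)) (f : Euc n → ℝ) : Prop :=
  ContDiffOn ℝ (⊤ : ℕ∞) f U ∧
  ∀ K : Set (Euc n), K ⊆ U → IsCompact K → ∃ ρ > 0, OmFinite ω f K ρ

/-- The Braun–Meise–Taylor class of Beurling type `E^{(ω)}(U)`. -/
def BeurlingW {n : ℕ} (ω : ℝ → ℝ) (U : Set (Euc n)) (f : Euc n → ℝ) : Prop :=
  ContDiffOn ℝ (⊤ : ℕ∞) f U ∧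
  ∀ K : Set (Euc n), K ⊆ U → IsCompact K → ∀ ρ > 0, OmFinite ω f K ρ

/-- An `E^{ω}`-plot (Roumieu type). -/
def RoumieuWPlot {m n : ℕ} (ω : ℝ → ℝ) (V : Set (Euc m)) (p : Euc m → Euc n) : Prop :=
  IsOpen V ∧ ∀ j : Fin n, RoumieuW ω V (fun x => p x j)

/-- An `E^{(ω)}`-plot (Beurling type). -/
def BeurlingWPlot {m n : ℕ} (ω : ℝ → ℝ) (V : Set (Euc m)) (p : Euc m → Euc n) : Prop :=
  IsOpen V ∧ ∀ j : Fin n, BeurlingW ω V (fun x => p x j)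

/-- `|K| = sup_{x ∈ K} |x|`. -/
def supNorm {n : ℕ} (K : Set (Euc n)) : ℝ := ⨆ x : K, ‖(x : Euc n)‖

/-- The class `E^{M}(ℝ)` for functions of one real variable. -/
def Roumieu1 (M : ℕ → ℝ) (g : ℝ → ℝ) : Prop :=
  ContDiff ℝ (⊤ : ℕ∞) g ∧
  ∀ K : Set ℝ, IsCompact K → ∃ ρ > 0, ∃ C : ℝ, ∀ t ∈ K, ∀ k : ℕ,
    |iteratedDeriv k g t| ≤ C * ρ ^ k * k.factorial * M k

/-- The class `A_m^{M}(U)`: smooth functions on `U` which are of class `E^{M}`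
along every `m`-dimensional `E^{M}`-plot in `U`. -/
def AClass {n : ℕ} (M : ℕ → ℝ) (m : ℕ) (U : Set (Euc n)) (f : Euc n → ℝ) : Prop :=
  ContDiffOn ℝ (⊤ : ℕ∞) f U ∧
  ∀ (V : Set (Euc m)) (p : Euc m → Euc n), IsOpen V → MapsTo p V U →
    (∀ j : Fin n, Roumieu M V (fun x => p x j)) → Roumieu M V (f ∘ p)

end

noncomputable section AuxLemmas

variable {n : ℕ}

lemma pder_contDiff {f : Euc n → ℝ} (hf : ContDiff ℝ (⊤:ℕ∞) f) (i : Fin n) :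
    ContDiff ℝ (⊤:ℕ∞) (pder i f) := by
  have h1 : pder i f =
      (fun L : Euc n →L[ℝ] ℝ => L (EuclideanSpace.single i 1)) ∘ fderiv ℝ f := rfl
  rw [h1]
  exact (ContinuousLinearMap.apply ℝ ℝ (EuclideanSpace.single i 1)).contDiff.comp
    (hf.fderiv_right (m := (⊤:ℕ∞)) (by simp))

lemma iter_pder_contDiff (i : Fin n) (m : ℕ) {f : Euc n → ℝ} (hf : ContDiff ℝ (⊤:ℕ∞) f) :
    ContDiff ℝ (⊤:ℕ∞) ((pder i)^[m] f) := by
  induction m generalizing f with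
  | zero => simpa using hf
  | succ m ih => rw [Function.iterate_succ_apply]; exact ih (pder_contDiff hf i)

def foldrD {n : ℕ} (α : Fin n → ℕ) (L : List (Fin n)) (f : Euc n → ℝ) : Euc n → ℝ :=
  L.foldr (fun i g => (pder i)^[α i] g) f

lemma pderM_eq_foldrD (α : Fin n → ℕ) (f : Euc n → ℝ) :
    pderM α f = foldrD α (List.finRange n) f := rfl

lemma foldrD_contDiff (α : Fin n → ℕ) (L : List (Fin n)) {f : Euc n → ℝ}
    (hf : ContDiff ℝ (⊤:ℕ∞) f) : ContDiff ℝ (⊤:ℕ∞) (foldrD α L f) := by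
  induction L with
  | nil => simpa [foldrD] using hf
  | cons j L ih => exact iter_pder_contDiff j (α j) ih

lemma pderM_contDiff (α : Fin n → ℕ) {f : Euc n → ℝ} (hf : ContDiff ℝ (⊤:ℕ∞) f) :
    ContDiff ℝ (⊤:ℕ∞) (pderM α f) := foldrD_contDiff α _ hf

lemma pder_comm {h : Euc n → ℝ} (hh : ContDiff ℝ (⊤:ℕ∞) h) (i j : Fin n) :
    pder i (pder j h) = pder j (pder i h) := by
  funext x
  have hd : DifferentiableAt ℝ (fderiv ℝ h) x :=
    ((hh.fderiv_right (m := (⊤:ℕ∞)) (by simp)).differentiable (by simp)) x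
  have key : ∀ w v : Euc n, fderiv ℝ (fun y => fderiv ℝ h y w) x v
      = fderiv ℝ (fderiv ℝ h) x v w := by
    intro w v
    have h2 : (fun y => fderiv ℝ h y w) = fun y => (fderiv ℝ h y) ((fun _ : Euc n => w) y) := rfl
    rw [h2, fderiv_clm_apply hd (differentiableAt_const w)]
    simp
  have hsymm : IsSymmSndFDerivAt ℝ h x :=
    (hh.contDiffAt).isSymmSndFDerivAt (by rw [minSmoothness_of_isRCLikeNormedField]; exact WithTop.coe_le_coe.mpr (le_top : (2:ℕ∞) ≤ ⊤))
  show fderiv ℝ (fun y => fderiv ℝ h y (EuclideanSpace.single j 1)) x (EuclideanSpace.single i 1)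
      = fderiv ℝ (fun y => fderiv ℝ h y (EuclideanSpace.single i 1)) x (EuclideanSpace.single j 1)
  rw [key, key, hsymm]

lemma pder_comm_iterate {h : Euc n → ℝ} (hh : ContDiff ℝ (⊤:ℕ∞) h) (i j : Fin n) (m : ℕ) :
    pder i ((pder j)^[m] h) = (pder j)^[m] (pder i h) := by
  induction m generalizing h with
  | zero => simp
  | succ m ih =>
    rw [Function.iterate_succ_apply, ih (pder_contDiff hh j), pder_comm hh i j,
      ← Function.iterate_succ_apply]

lemma foldrD_congr {α β : Fin n → ℕ} {L : List (Fin n)} (h : ∀ j ∈ L, α j = β j)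
    (f : Euc n → ℝ) : foldrD α L f = foldrD β L f := by
  induction L with
  | nil => rfl
  | cons j L ih =>
    show (pder j)^[α j] (foldrD α L f) = (pder j)^[β j] (foldrD β L f)
    rw [h j (List.mem_cons_self), ih (fun k hk => h k (List.mem_cons_of_mem _ hk))]

lemma foldrD_zero {α : Fin n → ℕ} {L : List (Fin n)} (h : ∀ j ∈ L, α j = 0)
    (f : Euc n → ℝ) : foldrD α L f = f := by
  induction L with
  | nil => rfl
  | cons j L ih =>
    show (pder j)^[α j] (foldrD α L f) = f
    rw [h j (List.mem_cons_self), ih (fun k hk => h k (List.mem_cons_of_mem _ hk))]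
    rfl

lemma pder_foldrD {h : Euc n → ℝ} (hh : ContDiff ℝ (⊤:ℕ∞) h) {L : List (Fin n)}
    (hnd : L.Nodup) {i : Fin n} (hi : i ∈ L) (β : Fin n → ℕ) :
    pder i (foldrD β L h) = foldrD (Function.update β i (β i + 1)) L h := by
  induction L with
  | nil => cases hi
  | cons j L ih =>
    rcases List.mem_cons.1 hi with rfl | hi'
    · have hnotin : i ∉ L := (List.nodup_cons.1 hnd).1
      show pder i ((pder i)^[β i] (foldrD β L h))
          = (pder i)^[Function.update β i (β i + 1) i] (foldrD (Function.update β i (β i + 1)) L h)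
      have hcong : foldrD (Function.update β i (β i + 1)) L h = foldrD β L h :=
        foldrD_congr (fun k hk => Function.update_of_ne (by rintro rfl; exact hnotin hk) _ _) h
      rw [Function.update_self, hcong]
      exact (Function.iterate_succ_apply' (pder i) (β i) (foldrD β L h)).symm
    · have hji : j ≠ i := by rintro rfl; exact (List.nodup_cons.1 hnd).1 hi'
      show pder i ((pder j)^[β j] (foldrD β L h))
          = (pder j)^[Function.update β i (β i + 1) j] (foldrD (Function.update β i (β i + 1)) L h)
      rw [Function.update_of_ne hji,
        pder_comm_iterate (foldrD_contDiff β L hh) i j (β j),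
        ih (List.nodup_cons.1 hnd).2 hi']

lemma foldrD_peel {f : Euc n → ℝ} {L : List (Fin n)} (hpw : L.Pairwise (· < ·)) {i : Fin n}
    (hi : i ∈ L) {β : Fin n → ℕ} (hz : ∀ j ∈ L, j < i → β j = 0) (hpos : 0 < β i) :
    foldrD β L f = pder i (foldrD (Function.update β i (β i - 1)) L f) := by
  induction L with
  | nil => cases hi
  | cons j L ih =>
    rcases List.mem_cons.1 hi with rfl | hi'
    · have hnotin : i ∉ L := fun hk => lt_irrefl i ((List.pairwise_cons.1 hpw).1 i hk)
      show (pder i)^[β i] (foldrD β L f)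
          = pder i ((pder i)^[Function.update β i (β i - 1) i]
              (foldrD (Function.update β i (β i - 1)) L f))
      have hcong : foldrD (Function.update β i (β i - 1)) L f = foldrD β L f :=
        foldrD_congr (fun k hk => Function.update_of_ne (by rintro rfl; exact hnotin hk) _ _) f
      rw [Function.update_self, hcong]
      conv_lhs => rw [show β i = (β i - 1) + 1 from (Nat.succ_pred_eq_of_pos hpos).symm]
      exact Function.iterate_succ_apply' (pder i) (β i - 1) (foldrD β L f)
    · have hj : j < i := (List.pairwise_cons.1 hpw).1 i hi'
      have hβj : β j = 0 := hz j (List.mem_cons_self) hj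
      show (pder j)^[β j] (foldrD β L f)
          = pder i ((pder j)^[Function.update β i (β i - 1) j]
              (foldrD (Function.update β i (β i - 1)) L f))
      rw [Function.update_of_ne (ne_of_lt hj), hβj]
      simp only [Function.iterate_zero, id]
      exact ih (List.pairwise_cons.1 hpw).2 hi' (fun k hk hk' => hz k (List.mem_cons_of_mem _ hk) hk')

lemma pder_const_mul {f : Euc n → ℝ} (hf : ContDiff ℝ (⊤:ℕ∞) f) (c : ℝ) (i : Fin n) :
    pder i (fun x => c * f x) = fun x => c * pder i f x := by
  funext x
  show fderiv ℝ (fun y => c * f y) x _ = _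
  rw [fderiv_const_mul (hf.differentiable (by simp) x) c]
  simp [pder]

lemma iterate_pder_const_mul {f : Euc n → ℝ} (hf : ContDiff ℝ (⊤:ℕ∞) f) (c : ℝ) (i : Fin n)
    (m : ℕ) : (pder i)^[m] (fun x => c * f x) = fun x => c * (pder i)^[m] f x := by
  induction m generalizing f with
  | zero => simp
  | succ m ih =>
    rw [Function.iterate_succ_apply, pder_const_mul hf c i, ih (pder_contDiff hf i),
      Function.iterate_succ_apply]

lemma foldrD_const_mul {f : Euc n → ℝ} (hf : ContDiff ℝ (⊤:ℕ∞) f) (c : ℝ) (α : Fin n → ℕ)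
    (L : List (Fin n)) : foldrD α L (fun x => c * f x) = fun x => c * foldrD α L f x := by
  induction L with
  | nil => rfl
  | cons j L ih =>
    show (pder j)^[α j] (foldrD α L (fun x => c * f x)) = _
    rw [ih, iterate_pder_const_mul (foldrD_contDiff α L hf) c j (α j)]
    rfl

lemma pder_pderM {h : Euc n → ℝ} (hh : ContDiff ℝ (⊤:ℕ∞) h) (i : Fin n) (β : Fin n → ℕ) :
    pder i (pderM β h) = pderM (Function.update β i (β i + 1)) h :=
  pder_foldrD hh (List.nodup_finRange n) (List.mem_finRange i) β

lemma pderM_peel {f : Euc n → ℝ} {i : Fin n} {α : Fin n → ℕ}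
    (hz : ∀ j, j < i → α j = 0) (hpos : 0 < α i) :
    pderM α f = pder i (pderM (Function.update α i (α i - 1)) f) :=
  foldrD_peel (List.pairwise_lt_finRange n) (List.mem_finRange i) (fun j _ hj => hz j hj) hpos

lemma pderM_const_mul {f : Euc n → ℝ} (hf : ContDiff ℝ (⊤:ℕ∞) f) (c : ℝ) (α : Fin n → ℕ) :
    pderM α (fun x => c * f x) = fun x => c * pderM α f x :=
  foldrD_const_mul hf c α _

lemma pderM_of_mdeg_zero {α : Fin n → ℕ} (hα : mdeg α = 0) (f : Euc n → ℝ) :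
    pderM α f = f := by
  have hz : ∀ j, α j = 0 := fun j =>
    (Finset.sum_eq_zero_iff.1 hα) j (Finset.mem_univ j)
  exact foldrD_zero (fun j _ => hz j) f

lemma opnorm_le_sum_pder (L : Euc n →L[ℝ] ℝ) :
    ‖L‖ ≤ ∑ i : Fin n, |L (EuclideanSpace.single i 1)| := by
  refine ContinuousLinearMap.opNorm_le_bound _ (Finset.sum_nonneg fun i _ => abs_nonneg _) ?_
  intro v
  have hv : v = ∑ i : Fin n, v i • EuclideanSpace.single i (1:ℝ) := by
    ext j
    rw [show (∑ i : Fin n, v i • EuclideanSpace.single i (1:ℝ)) j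
        = ∑ i : Fin n, (v i • EuclideanSpace.single i (1:ℝ)) j from by rw [WithLp.ofLp_sum]; exact Finset.sum_apply j _ _]
    simp [EuclideanSpace.single_apply]
  have hcoord : ∀ i : Fin n, |v i| ≤ ‖v‖ := by
    intro i
    have h1 : |v i| = |(inner ℝ (EuclideanSpace.single i (1:ℝ)) v : ℝ)| := by
      rw [EuclideanSpace.inner_single_left]; simp
    rw [h1]
    have := abs_real_inner_le_norm (EuclideanSpace.single i (1:ℝ)) v
    simpa [EuclideanSpace.norm_single] using this
  calc ‖L v‖ = ‖∑ i : Fin n, v i * L (EuclideanSpace.single i 1)‖ := by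
        conv_lhs => rw [hv]
        rw [map_sum]
        simp
    _ ≤ ∑ i : Fin n, ‖v i * L (EuclideanSpace.single i 1)‖ := norm_sum_le _ _
    _ ≤ ∑ i : Fin n, |L (EuclideanSpace.single i 1)| * ‖v‖ := by
        refine Finset.sum_le_sum fun i _ => ?_
        rw [norm_mul, mul_comm]
        exact mul_le_mul_of_nonneg_left (by simpa using hcoord i) (abs_nonneg _)
    _ = (∑ i : Fin n, |L (EuclideanSpace.single i 1)|) * ‖v‖ := (Finset.sum_mul _ _ _).symm

lemma core_swap {r : ℝ} {g : ℕ → Euc n → ℝ} (hg : ∀ ℓ, ContDiff ℝ (⊤:ℕ∞) (g ℓ))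
    (hbd : ∀ β : Fin n → ℕ, ∃ u : ℕ → ℝ, Summable u ∧
      ∀ ℓ, ∀ x ∈ closedBall (0:Euc n) r, |pderM β (g ℓ) x| ≤ u ℓ) :
    ∀ (α : Fin n → ℕ), ∀ x ∈ ball (0:Euc n) r,
      pderM α (fun y => ∑' ℓ, g ℓ y) x = ∑' ℓ, pderM α (g ℓ) x := by
  classical
  suffices H : ∀ k (α : Fin n → ℕ), mdeg α = k → ∀ x ∈ ball (0:Euc n) r,
      pderM α (fun y => ∑' ℓ, g ℓ y) x = ∑' ℓ, pderM α (g ℓ) x by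
    exact fun α => H (mdeg α) α rfl
  intro k
  induction k using Nat.strong_induction_on with
  | _ k IH =>
  intro α hα x hx
  rcases Nat.eq_zero_or_pos k with rfl | hk
  · rw [pderM_of_mdeg_zero hα]
    exact tsum_congr fun ℓ => by rw [pderM_of_mdeg_zero hα]
  · -- minimal index i with α i ≠ 0
    have hne : (Finset.univ.filter fun i : Fin n => α i ≠ 0).Nonempty := by
      by_contra h
      rw [Finset.not_nonempty_iff_eq_empty, Finset.filter_eq_empty_iff] at h
      have : mdeg α = 0 := Finset.sum_eq_zero fun j hj => by
        have := h hj; simpa using this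
      omega
    set i := (Finset.univ.filter fun i : Fin n => α i ≠ 0).min' hne with hidef
    have hi : α i ≠ 0 := by
      have := (Finset.univ.filter fun i : Fin n => α i ≠ 0).min'_mem hne
      simpa using this
    have hmin : ∀ j, j < i → α j = 0 := by
      intro j hj
      by_contra hja
      have hjmem : j ∈ Finset.univ.filter fun i : Fin n => α i ≠ 0 := by simpa using hja
      exact absurd (Finset.min'_le _ j hjmem) (not_le.2 hj)
    set α' := Function.update α i (α i - 1) with hα'def
    have hsum1 : mdeg α = α i + ∑ j ∈ Finset.univ.erase i, α j := by
      rw [mdeg, ← Finset.add_sum_erase _ _ (Finset.mem_univ i)]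
    have hsum2 : mdeg α' = (α i - 1) + ∑ j ∈ Finset.univ.erase i, α j := by
      rw [mdeg, ← Finset.add_sum_erase _ _ (Finset.mem_univ i), hα'def, Function.update_self]
      congr 1
      exact Finset.sum_congr rfl fun j hj =>
        Function.update_of_ne (Finset.ne_of_mem_erase hj) _ _
    have hm' : mdeg α' = k - 1 := by omega
    have hmlt : mdeg α' < k := by omega
    have hαback : Function.update α' i (α' i + 1) = α := by
      funext j
      by_cases hj : j = i
      · subst hj
        rw [Function.update_self, hα'def, Function.update_self]
        omega
      · rw [Function.update_of_ne hj, hα'def, Function.update_of_ne hj]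
    -- summable bounds
    obtain ⟨u0, hu0, hu0b⟩ := hbd α'
    choose uu huu huub using fun i' : Fin n => hbd (Function.update α' i' (α' i' + 1))
    set U : ℕ → ℝ := fun ℓ => ∑ i' : Fin n, uu i' ℓ with hUdef
    have hU : Summable U := summable_sum fun i' _ => huu i'
    have hfd : ∀ ℓ : ℕ, ∀ y ∈ ball (0:Euc n) r,
        ‖fderiv ℝ (pderM α' (g ℓ)) y‖ ≤ U ℓ := by
      intro ℓ y hy
      refine (opnorm_le_sum_pder _).trans (Finset.sum_le_sum fun i' _ => ?_)
      have h1 : fderiv ℝ (pderM α' (g ℓ)) y (EuclideanSpace.single i' 1)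
          = pder i' (pderM α' (g ℓ)) y := rfl
      rw [h1, pder_pderM (hg ℓ) i' α']
      exact huub i' ℓ y (ball_subset_closedBall hy)
    have hdiff : ∀ ℓ : ℕ, ∀ z : Euc n, z ∈ ball (0:Euc n) r →
        HasFDerivAt (pderM α' (g ℓ)) (fderiv ℝ (pderM α' (g ℓ)) z) z := fun ℓ z _ =>
      (((pderM_contDiff α' (hg ℓ)).differentiable (by simp)) z).hasFDerivAt
    have hsum0 : Summable fun ℓ => pderM α' (g ℓ) x := by
      refine Summable.of_norm_bounded hu0 fun ℓ => ?_
      simpa using hu0b ℓ x (ball_subset_closedBall hx)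
    set s : Euc n → ℝ := fun y => ∑' ℓ, pderM α' (g ℓ) y with hsdef
    have hS : HasFDerivAt s (∑' ℓ, fderiv ℝ (pderM α' (g ℓ)) x) x :=
      hasFDerivAt_tsum_of_isPreconnected hU isOpen_ball
        (convex_ball (0:Euc n) r).isPreconnected hdiff hfd hx hsum0 hx
    have hipos : 0 < α i := Nat.pos_of_ne_zero hi
    have hpeel1 : pderM α (fun y => ∑' ℓ, g ℓ y) x
        = pder i (pderM α' (fun y => ∑' ℓ, g ℓ y)) x := by
      rw [pderM_peel hmin hipos]
    have hEqOn : Set.EqOn (pderM α' (fun y => ∑' ℓ, g ℓ y)) s (ball (0:Euc n) r) :=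
      fun z hz => IH (mdeg α') hmlt α' rfl z hz
    have hev : pderM α' (fun y => ∑' ℓ, g ℓ y) =ᶠ[nhds x] s :=
      hEqOn.eventuallyEq_of_mem (isOpen_ball.mem_nhds hx)
    rw [hpeel1]
    show fderiv ℝ (pderM α' (fun y => ∑' ℓ, g ℓ y)) x (EuclideanSpace.single i 1) = _
    rw [hev.fderiv_eq, hS.fderiv]
    have hsummL : Summable fun ℓ => fderiv ℝ (pderM α' (g ℓ)) x :=
      Summable.of_norm_bounded hU fun ℓ => hfd ℓ x hx
    rw [show (∑' ℓ, fderiv ℝ (pderM α' (g ℓ)) x) (EuclideanSpace.single i 1)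
        = (ContinuousLinearMap.apply ℝ ℝ (EuclideanSpace.single i 1))
            (∑' ℓ, fderiv ℝ (pderM α' (g ℓ)) x) from rfl,
      ContinuousLinearMap.map_tsum _ hsummL]
    refine tsum_congr fun ℓ => ?_
    have h2 : (ContinuousLinearMap.apply ℝ ℝ (EuclideanSpace.single i 1))
        (fderiv ℝ (pderM α' (g ℓ)) x) = pder i (pderM α' (g ℓ)) x := rfl
    rw [h2, pder_pderM (hg ℓ) i α', hαback]

lemma Mratio (M : ℕ → ℝ) (hMpos : ∀ k, 0 < M k)
    (hmono : Monotone fun k : ℕ => (M (k+1)) ^ (((k:ℝ)+1)⁻¹))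
    (hMone : ∀ k, 1 ≤ M k) {ℓ k : ℕ} (hℓ : 1 ≤ ℓ) (hlk : ℓ ≤ k) :
    (M ℓ) ^ (((k:ℝ)+1) / (2*(ℓ:ℝ))) ≤ M k := by
  obtain ⟨p, rfl⟩ : ∃ p, ℓ = p + 1 := ⟨ℓ-1, by omega⟩
  obtain ⟨q, rfl⟩ : ∃ q, k = q + 1 := ⟨k-1, by omega⟩
  have h1 : (M (p+1)) ^ (((p:ℝ)+1)⁻¹) ≤ (M (q+1)) ^ (((q:ℝ)+1)⁻¹) := hmono (by omega)
  have e1 : ((((q+1):ℕ):ℝ)+1) / (2*(((p+1):ℕ):ℝ)) = ((p:ℝ)+1)⁻¹ * (((q:ℝ)+2)/2) := by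
    push_cast
    have hp : ((p:ℝ)+1) ≠ 0 := by positivity
    field_simp
    ring
  rw [e1, Real.rpow_mul (hMpos _).le]
  calc ((M (p+1)) ^ (((p:ℝ)+1)⁻¹)) ^ (((q:ℝ)+2)/2)
      ≤ ((M (q+1)) ^ (((q:ℝ)+1)⁻¹)) ^ (((q:ℝ)+2)/2) :=
        Real.rpow_le_rpow (Real.rpow_nonneg (hMpos _).le _) h1 (by positivity)
    _ = (M (q+1)) ^ ((((q:ℝ)+1)⁻¹) * (((q:ℝ)+2)/2)) := (Real.rpow_mul (hMpos _).le _ _).symm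
    _ ≤ (M (q+1)) ^ (1:ℝ) := by
        apply Real.rpow_le_rpow_of_exponent_le (hMone _)
        rw [inv_mul_le_iff₀ (by positivity)]
        have : (0:ℝ) ≤ (q:ℝ) := Nat.cast_nonneg q
        nlinarith
    _ = M (q+1) := Real.rpow_one _

lemma Mone (M : ℕ → ℝ) (hMpos : ∀ k, 0 < M k) (hM0 : M 0 = 1) (hM1 : 1 ≤ M 1)
    (hmono : Monotone fun k : ℕ => (M (k+1)) ^ (((k:ℝ)+1)⁻¹)) : ∀ k, 1 ≤ M k := by
  intro k
  cases k with
  | zero => rw [hM0]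
  | succ p =>
    have h0 : (M 1) ^ (((0:ℕ):ℝ)+1)⁻¹ ≤ (M (p+1)) ^ (((p:ℝ)+1)⁻¹) := hmono (Nat.zero_le p)
    have h1 : (1:ℝ) ≤ (M (p+1)) ^ (((p:ℝ)+1)⁻¹) := by
      refine le_trans ?_ h0
      rw [show (((0:ℕ):ℝ)+1)⁻¹ = (1:ℝ) by norm_num, Real.rpow_one]
      exact hM1
    by_contra h
    push_neg at h
    have h2 := Real.rpow_lt_one (hMpos (p+1)).le h (by positivity : (0:ℝ) < ((p:ℝ)+1)⁻¹)
    exact absurd h2 (not_lt.2 h1)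

lemma geom_aux (m : ℕ) : Summable (fun ℓ : ℕ => ((2:ℝ)^(ℓ+m+1))⁻¹) := by
  have h := summable_geometric_two.mul_left ((2:ℝ)^(m+1))⁻¹
  refine h.congr fun ℓ => ?_
  rw [one_div, inv_pow, ← mul_inv, ← pow_add, show m + 1 + ℓ = ℓ + m + 1 by omega]

lemma geom_val : ∑' ℓ : ℕ, ((2:ℝ)^(ℓ+1))⁻¹ = 1 := by
  have h := tsum_geometric_two' 1
  rw [← h]
  refine tsum_congr fun ℓ => ?_
  rw [pow_succ]
  field_simp

end AuxLemmas

/-- Uniform estimate for the sum `f = ∑_ℓ 2^{-ℓ} f_ℓ` on compact sets staying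
away from the points `a_ℓ`: the bound does not depend on the constants `c_ℓ`
nor on the functions `f_ℓ`. -/
theorem statement9 (n : ℕ) (hn : 2 ≤ n) (M : ℕ → ℝ) (hM : RegularWeightSeq M)
    (hstrict : StrictMono fun k : ℕ => (M (k + 1)) ^ (((k : ℝ) + 1)⁻¹))
    (B : ℝ) (hB : 0 < B)
    (a : ℕ → Euc n) (R : ℝ) (hbd : ∀ ℓ : ℕ, 1 ≤ ℓ → ‖a ℓ‖ ≤ R)
    (K : Set (Euc n)) (hK : IsCompact K) (hKa : ∀ ℓ : ℕ, 1 ≤ ℓ → a ℓ ∉ K)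
    (k0 : ℕ)
    (hdist : ∀ k : ℕ, k0 < k → (M k) ^ (-(1 / (4 * (k : ℝ)))) ≤ infDist (a k) K) :
    ∃ ρ > 0, ∃ C > 0,
      ∀ c : ℕ → ℝ, (∀ ℓ : ℕ, 1 ≤ ℓ → M ℓ ≤ c ℓ) →
      ∀ F : ℕ → Euc n → ℝ, (∀ ℓ : ℕ, 1 ≤ ℓ → ContDiff ℝ (⊤ : ℕ∞) (F ℓ)) →
      (∀ ℓ : ℕ, 1 ≤ ℓ → ∀ K' : Set (Euc n), IsCompact K' → ∀ α : Fin n → ℕ,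
        ∀ x ∈ K',
          |pderM α (F ℓ) x| ≤
            B ^ mdeg α * (supNorm K' + (1 + ⨆ j : ℕ, ‖a (j + 1)‖)) ^ mdeg α *
              (mdeg α).factorial *
              (if mdeg α < ℓ then 1 else c ℓ ^ (2 * mdeg α - 2 * ℓ + 1) * M (mdeg α))) →
      (∀ ℓ : ℕ, 1 ≤ ℓ → ∀ K' : Set (Euc n), IsCompact K' → ∀ α : Fin n → ℕ,
        ∀ x ∈ K', x ≠ a ℓ →
          |pderM α (F ℓ) x| ≤
            B ^ mdeg α * (supNorm K' + (1 + ⨆ j : ℕ, ‖a (j + 1)‖)) ^ mdeg α *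
              (mdeg α).factorial *
              (1 + ‖x - a ℓ‖ ^ (-2 * ((mdeg α : ℤ) + 1)))) →
      DCBound M (fun x => ∑' ℓ : ℕ, ((2 : ℝ) ^ (ℓ + 1))⁻¹ * F (ℓ + 1) x) K ρ C := by
  classical
  obtain ⟨hMpos, hMlog, hM0, hM1, hMtend⟩ := hM
  have hmono : Monotone fun k : ℕ => (M (k + 1)) ^ (((k : ℝ) + 1)⁻¹) := hstrict.monotone
  have hMone : ∀ k, 1 ≤ M k := Mone M hMpos hM0 hM1 hmono
  rcases Set.eq_empty_or_nonempty K with rfl | hKne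
  · exact ⟨1, one_pos, 1, one_pos, fun c hc F hF h1 h2 x hx α =>
      absurd hx (Set.notMem_empty x)⟩
  -- radius
  obtain ⟨r0, hr0⟩ := hK.isBounded.subset_closedBall (0 : Euc n)
  set r : ℝ := |r0| + 1 with hrdef
  have hrpos : 0 < r := by positivity
  have hKball : K ⊆ ball (0:Euc n) r := by
    intro y hy
    have := hr0 hy
    rw [mem_closedBall] at this
    rw [mem_ball]
    calc dist y 0 ≤ r0 := this
      _ ≤ |r0| := le_abs_self r0
      _ < r := by rw [hrdef]; linarith
  set KB : Set (Euc n) := closedBall (0:Euc n) r with hKBdef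
  have hKBcpt : IsCompact KB := isCompact_closedBall _ _
  have hKsub : K ⊆ KB := hKball.trans ball_subset_closedBall
  set A : ℝ := 1 + ⨆ j : ℕ, ‖a (j + 1)‖ with hAdef
  have hAbdd : BddAbove (Set.range fun j : ℕ => ‖a (j + 1)‖) :=
    ⟨R, by rintro _ ⟨j, rfl⟩; exact hbd (j+1) (by omega)⟩
  have hiSup0 : (0:ℝ) ≤ ⨆ j : ℕ, ‖a (j + 1)‖ :=
    le_trans (norm_nonneg (a 1)) (le_ciSup hAbdd 0)
  have hA1 : 1 ≤ A := by rw [hAdef]; linarith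
  set T : ℝ := supNorm KB + A with hTdef
  have hSN0 : 0 ≤ supNorm KB := by
    have hne : Nonempty KB := ⟨⟨0, mem_closedBall_self hrpos.le⟩⟩
    have hbdd : BddAbove (Set.range fun x : KB => ‖(x:Euc n)‖) := by
      refine ⟨r, ?_⟩
      rintro _ ⟨x, rfl⟩
      exact mem_closedBall_zero_iff.1 x.2
    exact le_trans (norm_nonneg _) (le_ciSup hbdd ⟨0, mem_closedBall_self hrpos.le⟩)
  have hT1 : 1 ≤ T := by rw [hTdef]; linarith
  have hTpos : 0 < T := lt_of_lt_of_le one_pos hT1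
  -- δ₀ and ρ₀
  have hinf : ∀ ℓ, 1 ≤ ℓ → 0 < infDist (a ℓ) K := fun ℓ hℓ =>
    (hK.isClosed.notMem_iff_infDist_pos hKne).1 (hKa ℓ hℓ)
  set s0 : Finset ℝ := insert 1 ((Finset.Icc 1 k0).image fun ℓ => infDist (a ℓ) K) with hs0def
  set δ₀ : ℝ := s0.min' (Finset.insert_nonempty _ _) with hδdef
  have hδpos : 0 < δ₀ := by
    rw [hδdef]
    rw [Finset.lt_min'_iff]
    intro y hy
    rcases Finset.mem_insert.1 hy with rfl | hy'
    · exact one_pos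
    · obtain ⟨ℓ, hℓ, rfl⟩ := Finset.mem_image.1 hy'
      exact hinf ℓ (Finset.mem_Icc.1 hℓ).1
  have hδle : ∀ ℓ, 1 ≤ ℓ → ℓ ≤ k0 → δ₀ ≤ infDist (a ℓ) K := fun ℓ h1 h2 =>
    Finset.min'_le _ _ (Finset.mem_insert_of_mem
      (Finset.mem_image_of_mem _ (Finset.mem_Icc.2 ⟨h1, h2⟩)))
  set ρ₀ : ℝ := max 1 δ₀⁻¹ with hρ₀def
  have hρ₀1 : 1 ≤ ρ₀ := le_max_left _ _
  have hρ₀pos : 0 < ρ₀ := lt_of_lt_of_le one_pos hρ₀1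
  have hδinvρ : δ₀⁻¹ ≤ ρ₀ := le_max_right _ _
  clear_value r KB A T δ₀ ρ₀
  refine ⟨B * T * ρ₀^2, mul_pos (mul_pos hB hTpos) (pow_pos hρ₀pos 2),
    3 * ρ₀^2, mul_pos (by norm_num) (pow_pos hρ₀pos 2), ?_⟩
  intro c hc F hF hF1 hF2
  intro x hx α
  set k := mdeg α with hkdef
  have hBT : (0:ℝ) ≤ B ^ k * T ^ k * (k.factorial : ℝ) :=
    mul_nonneg (mul_nonneg (pow_nonneg hB.le k) (pow_nonneg hTpos.le k)) (Nat.cast_nonneg _)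
  -- smoothness of the scaled terms
  have hgsm : ∀ ℓ : ℕ, ContDiff ℝ (⊤:ℕ∞) (fun y : Euc n => ((2:ℝ)^(ℓ+1))⁻¹ * F (ℓ+1) y) :=
    fun ℓ => contDiff_const.mul (hF (ℓ+1) (by omega))
  -- summable bounds for the swap lemma
  have hbds : ∀ β : Fin n → ℕ, ∃ u : ℕ → ℝ, Summable u ∧
      ∀ ℓ, ∀ y ∈ closedBall (0:Euc n) r,
        |pderM β (fun z : Euc n => ((2:ℝ)^(ℓ+1))⁻¹ * F (ℓ+1) z) y| ≤ u ℓ := by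
    intro β
    refine ⟨fun ℓ => ((2:ℝ)^(ℓ+1))⁻¹ * (B ^ mdeg β * T ^ mdeg β * ((mdeg β).factorial : ℝ) *
      (if mdeg β < ℓ+1 then 1 else c (ℓ+1) ^ (2 * mdeg β - 2 * (ℓ+1) + 1) * M (mdeg β))), ?_, ?_⟩
    · rw [← summable_nat_add_iff (mdeg β)]
      have hg := (geom_aux (mdeg β)).mul_right
        (B ^ mdeg β * T ^ mdeg β * ((mdeg β).factorial : ℝ))
      refine hg.congr fun ℓ => ?_
      beta_reduce
      rw [if_pos (by omega : mdeg β < ℓ + mdeg β + 1)]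
      ring
    · intro ℓ y hy
      rw [pderM_const_mul (hF (ℓ+1) (by omega)) _ β]
      beta_reduce
      rw [abs_mul, abs_of_nonneg (by positivity : (0:ℝ) ≤ ((2:ℝ)^(ℓ+1))⁻¹)]
      refine mul_le_mul_of_nonneg_left ?_ (by positivity)
      have h := hF1 (ℓ+1) (by omega) KB hKBcpt β y (by rwa [hKBdef])
      calc |pderM β (F (ℓ+1)) y|
          ≤ B ^ mdeg β * (supNorm KB + A) ^ mdeg β *
            ((mdeg β).factorial : ℝ) *
            (if mdeg β < ℓ+1 then 1 else c (ℓ+1) ^ (2 * mdeg β - 2 * (ℓ+1) + 1) * M (mdeg β)) := h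
        _ = B ^ mdeg β * T ^ mdeg β * ((mdeg β).factorial : ℝ) *
            (if mdeg β < ℓ+1 then 1 else c (ℓ+1) ^ (2 * mdeg β - 2 * (ℓ+1) + 1) * M (mdeg β)) := by
            rw [hTdef]
  have hswap : pderM α (fun y : Euc n => ∑' ℓ : ℕ, ((2:ℝ)^(ℓ+1))⁻¹ * F (ℓ+1) y) x
      = ∑' ℓ : ℕ, pderM α (fun z : Euc n => ((2:ℝ)^(ℓ+1))⁻¹ * F (ℓ+1) z) x :=
    core_swap hgsm hbds α x (hKball hx)
  rw [show (fun x : Euc n => ∑' ℓ : ℕ, ((2:ℝ)^(ℓ+1))⁻¹ * F (ℓ+1) x)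
      = (fun y : Euc n => ∑' ℓ : ℕ, ((2:ℝ)^(ℓ+1))⁻¹ * F (ℓ+1) y) from rfl, hswap]
  -- termwise bound
  have hDone : 1 ≤ 3 * ρ₀^(2*k+2) * M k := by
    have h1 : (1:ℝ) ≤ ρ₀^(2*k+2) := one_le_pow₀ hρ₀1
    nlinarith [hMone k]
  have hterm : ∀ ℓ : ℕ, |pderM α (fun z : Euc n => ((2:ℝ)^(ℓ+1))⁻¹ * F (ℓ+1) z) x|
      ≤ ((2:ℝ)^(ℓ+1))⁻¹ * (B ^ k * T ^ k * (k.factorial : ℝ) * (3 * ρ₀^(2*k+2) * M k)) := by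
    intro ℓ
    rw [pderM_const_mul (hF (ℓ+1) (by omega)) _ α]
    beta_reduce
    rw [abs_mul, abs_of_nonneg (by positivity : (0:ℝ) ≤ ((2:ℝ)^(ℓ+1))⁻¹)]
    refine mul_le_mul_of_nonneg_left ?_ (by positivity)
    by_cases hcase : k < ℓ + 1
    · have h := hF1 (ℓ+1) (by omega) KB hKBcpt α x (hKsub hx)
      rw [if_pos (by rwa [← hkdef])] at h
      calc |pderM α (F (ℓ+1)) x|
          ≤ B ^ k * (supNorm KB + A) ^ k * (k.factorial : ℝ) * 1 := by
            rw [hkdef]; exact h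
        _ = B ^ k * T ^ k * (k.factorial : ℝ) * 1 := by rw [hTdef]
        _ ≤ B ^ k * T ^ k * (k.factorial : ℝ) * (3 * ρ₀^(2*k+2) * M k) := by
            refine mul_le_mul_of_nonneg_left hDone hBT
    · push_neg at hcase
      have hL1 : 1 ≤ ℓ + 1 := by omega
      have hxne : x ≠ a (ℓ+1) := by
        intro hxa
        exact hKa (ℓ+1) hL1 (hxa ▸ hx)
      have h := hF2 (ℓ+1) hL1 KB hKBcpt α x (hKsub hx) hxne
      have hdpos : 0 < ‖x - a (ℓ+1)‖ := by
        rw [norm_pos_iff]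
        exact sub_ne_zero.2 hxne
      have hdxa : infDist (a (ℓ+1)) K ≤ ‖x - a (ℓ+1)‖ := by
        have := infDist_le_dist_of_mem (x := a (ℓ+1)) hx
        rwa [dist_comm, dist_eq_norm] at this
      have hzp : ‖x - a (ℓ+1)‖ ^ (-2 * ((k:ℤ) + 1)) = (‖x - a (ℓ+1)‖ ^ (2*k+2 : ℕ))⁻¹ := by
        rw [show (-2 * ((k:ℤ) + 1)) = -((2*k+2 : ℕ) : ℤ) by push_cast; ring, zpow_neg,
          zpow_natCast]
      have hkey : (‖x - a (ℓ+1)‖ ^ (2*k+2 : ℕ))⁻¹ ≤ ρ₀^(2*k+2) + M k := by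
        rcases le_or_gt (ℓ+1) k0 with hLk0 | hLk0
        · have h1 : δ₀ ≤ ‖x - a (ℓ+1)‖ := (hδle (ℓ+1) hL1 hLk0).trans hdxa
          have h2 : (‖x - a (ℓ+1)‖ ^ (2*k+2 : ℕ))⁻¹ ≤ (δ₀ ^ (2*k+2 : ℕ))⁻¹ := by
            apply inv_anti₀ (pow_pos hδpos _)
            exact pow_le_pow_left₀ hδpos.le h1 _
          have h3 : (δ₀ ^ (2*k+2 : ℕ))⁻¹ = (δ₀⁻¹)^(2*k+2) := (inv_pow δ₀ _).symm
          have h4 : (δ₀⁻¹)^(2*k+2) ≤ ρ₀^(2*k+2) :=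
            pow_le_pow_left₀ (inv_nonneg.2 hδpos.le) hδinvρ _
          have h5 : (0:ℝ) < M k := hMpos k
          calc (‖x - a (ℓ+1)‖ ^ (2*k+2 : ℕ))⁻¹ ≤ (δ₀ ^ (2*k+2 : ℕ))⁻¹ := h2
            _ = (δ₀⁻¹)^(2*k+2) := h3
            _ ≤ ρ₀^(2*k+2) := h4
            _ ≤ ρ₀^(2*k+2) + M k := by linarith
        · have he := hdist (ℓ+1) hLk0
          have hepos : 0 < (M (ℓ+1)) ^ (-(1 / (4 * ((ℓ+1 : ℕ) : ℝ)))) :=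
            Real.rpow_pos_of_pos (hMpos (ℓ+1)) _
          have h1 : (M (ℓ+1)) ^ (-(1 / (4 * ((ℓ+1 : ℕ) : ℝ)))) ≤ ‖x - a (ℓ+1)‖ :=
            he.trans hdxa
          have h2 : (‖x - a (ℓ+1)‖ ^ (2*k+2 : ℕ))⁻¹
              ≤ (((M (ℓ+1)) ^ (-(1 / (4 * ((ℓ+1 : ℕ) : ℝ))))) ^ (2*k+2 : ℕ))⁻¹ := by
            apply inv_anti₀ (pow_pos hepos _)
            exact pow_le_pow_left₀ hepos.le h1 _
          have h3 : (((M (ℓ+1)) ^ (-(1 / (4 * ((ℓ+1 : ℕ) : ℝ))))) ^ (2*k+2 : ℕ))⁻¹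
              = (M (ℓ+1)) ^ (((k:ℝ)+1) / (2*((ℓ+1 : ℕ) : ℝ))) := by
            rw [← Real.rpow_natCast ((M (ℓ+1)) ^ (-(1 / (4 * ((ℓ+1 : ℕ) : ℝ))))) (2*k+2),
              ← Real.rpow_mul (hMpos (ℓ+1)).le, ← Real.rpow_neg (hMpos (ℓ+1)).le]
            congr 1
            push_cast
            have hl : ((ℓ:ℝ)+1) ≠ 0 := by positivity
            field_simp
            ring
          have h4 : (M (ℓ+1)) ^ (((k:ℝ)+1) / (2*((ℓ+1 : ℕ) : ℝ))) ≤ M k :=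
            Mratio M hMpos hmono hMone hL1 hcase
          have h6 : (0:ℝ) < ρ₀^(2*k+2) := pow_pos hρ₀pos _
          calc (‖x - a (ℓ+1)‖ ^ (2*k+2 : ℕ))⁻¹
              ≤ (((M (ℓ+1)) ^ (-(1 / (4 * ((ℓ+1 : ℕ) : ℝ))))) ^ (2*k+2 : ℕ))⁻¹ := h2
            _ = (M (ℓ+1)) ^ (((k:ℝ)+1) / (2*((ℓ+1 : ℕ) : ℝ))) := h3
            _ ≤ M k := h4
            _ ≤ ρ₀^(2*k+2) + M k := by linarith
      have hfinal : 1 + ‖x - a (ℓ+1)‖ ^ (-2 * ((k:ℤ) + 1)) ≤ 3 * ρ₀^(2*k+2) * M k := by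
        rw [hzp]
        have h1 : (1:ℝ) ≤ ρ₀^(2*k+2) := one_le_pow₀ hρ₀1
        nlinarith [hMone k, hkey]
      calc |pderM α (F (ℓ+1)) x|
          ≤ B ^ k * (supNorm KB + A) ^ k * (k.factorial : ℝ) *
            (1 + ‖x - a (ℓ+1)‖ ^ (-2 * ((k:ℤ) + 1))) := by rw [hkdef]; exact h
        _ = B ^ k * T ^ k * (k.factorial : ℝ) *
            (1 + ‖x - a (ℓ+1)‖ ^ (-2 * ((k:ℤ) + 1))) := by rw [hTdef]
        _ ≤ B ^ k * T ^ k * (k.factorial : ℝ) * (3 * ρ₀^(2*k+2) * M k) := by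
            refine mul_le_mul_of_nonneg_left hfinal hBT
  -- sum up
  have hsummB : Summable (fun ℓ : ℕ =>
      ((2:ℝ)^(ℓ+1))⁻¹ * (B ^ k * T ^ k * (k.factorial : ℝ) * (3 * ρ₀^(2*k+2) * M k))) := by
    have hg0 : Summable (fun ℓ : ℕ => ((2:ℝ)^(ℓ+1))⁻¹) := by
      have := geom_aux 0
      refine this.congr fun ℓ => ?_
      norm_num
    exact hg0.mul_right _
  calc |∑' ℓ : ℕ, pderM α (fun z : Euc n => ((2:ℝ)^(ℓ+1))⁻¹ * F (ℓ+1) z) x|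
      ≤ ∑' ℓ : ℕ, ((2:ℝ)^(ℓ+1))⁻¹ * (B ^ k * T ^ k * (k.factorial : ℝ) *
          (3 * ρ₀^(2*k+2) * M k)) := by
        have hb := tsum_of_norm_bounded
          (f := fun ℓ : ℕ => pderM α (fun z : Euc n => ((2:ℝ)^(ℓ+1))⁻¹ * F (ℓ+1) z) x)
          hsummB.hasSum (fun ℓ => by simpa [Real.norm_eq_abs] using hterm ℓ)
        simpa [Real.norm_eq_abs] using hb
    _ = (∑' ℓ : ℕ, ((2:ℝ)^(ℓ+1))⁻¹) * (B ^ k * T ^ k * (k.factorial : ℝ) *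
          (3 * ρ₀^(2*k+2) * M k)) := tsum_mul_right
    _ = B ^ k * T ^ k * (k.factorial : ℝ) * (3 * ρ₀^(2*k+2) * M k) := by
        rw [geom_val, one_mul]
    _ = 3 * ρ₀^2 * (B * T * ρ₀^2) ^ k * (k.factorial : ℝ) * M k := by
        rw [mul_pow, mul_pow, ← pow_mul, pow_add]
        ring
end

section
/- Let {M^x}_{x>0} be a family of quasianalytic regular weight sequences such that (M^x_k)^{1/k} → ∞ as k → ∞ for every x > 0, and M^x_k ≤ M^y_k for all k whenever x ≤ y. Then there exists a quasianalytic regular weight sequence L = (L_k) such that (L_k / M^x_k)^{1/k} → 0 as k → ∞ for every x > 0. -/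
open Filter Metric Set Asymptotics
open scoped BigOperators Topology NNReal

/-!
A regular weight sequence is the same thing as its ratio sequence `μ_k = M_{k+1}/M_k`, which is
nondecreasing, at least `1` and tends to infinity; conversely, the partial products of such a
sequence form a regular weight sequence. Discretize the family to `N^j = M^{1/(j+1)}` with ratio
sequences `μ^j`. A diagonal argument yields a nondecreasing integer sequence `l_k → ∞` with
`l_k² ≤ μ^j_k` for all `j < l_k`, and `L_k = l_0 ⋯ l_{k-1}` does the job: `l ≤ μ^0` makes `L`
quasianalytic by comparison with `N^0`, and `(L_k/N^j_k)^{1/k}` is the geometric mean of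
`l_m/μ^j_m`, which is eventually at most `1/l_m` and hence tends to `0` (AM–GM and Cesàro).
-/

open Finset

lemma tendsto_geomMean_zero {q : ℕ → ℝ} (hq : ∀ k, 0 ≤ q k) (h : Tendsto q atTop (𝓝 0)) :
    Tendsto (fun k : ℕ => (∏ m ∈ range k, q m) ^ ((k : ℝ)⁻¹)) atTop (𝓝 0) := by
  refine squeeze_zero' (.of_forall fun k => Real.rpow_nonneg (prod_nonneg fun m _ => hq m) _)
    ?_ h.cesaro
  filter_upwards [eventually_gt_atTop 0] with k hk
  simpa [div_eq_inv_mul] using Real.geom_mean_le_arith_mean (range k) (fun _ => 1) q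
    (by simp) (by simpa using hk) (fun m _ => hq m)

lemma tendsto_geomMean_atTop {l : ℕ → ℝ} (hl : ∀ k, 0 < l k) (h : Tendsto l atTop atTop) :
    Tendsto (fun k : ℕ => (∏ m ∈ range k, l m) ^ ((k : ℝ)⁻¹)) atTop atTop := by
  have hinv := tendsto_geomMean_zero (fun k => (inv_pos.2 (hl k)).le) h.inv_tendsto_atTop
  have hpos : ∀ k : ℕ, 0 < (∏ m ∈ range k, (l m)⁻¹) ^ ((k : ℝ)⁻¹) := fun k =>
    Real.rpow_pos_of_pos (prod_pos fun m _ => inv_pos.2 (hl m)) _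
  refine (tendsto_inv_nhdsGT_zero.comp
    (tendsto_nhdsWithin_iff.2 ⟨hinv, .of_forall hpos⟩)).congr fun k => ?_
  simp [prod_inv_distrib, Real.inv_rpow (prod_nonneg fun m _ => (hl m).le)]

noncomputable def weightRatio (M : ℕ → ℝ) (k : ℕ) : ℝ := M (k + 1) / M k

lemma weightRatio_prod_range {l : ℕ → ℝ} (hl : ∀ k, l k ≠ 0) (k : ℕ) :
    weightRatio (fun k => ∏ m ∈ range k, l m) k = l k := by
  rw [weightRatio, prod_range_succ, mul_div_cancel_left₀ _ (prod_ne_zero_iff.2 fun m _ => hl m)]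

namespace RegularWeightSeq

variable {M : ℕ → ℝ}

lemma prod_range_weightRatio (hM : RegularWeightSeq M) (k : ℕ) :
    ∏ m ∈ range k, weightRatio M m = M k := by
  induction k with
  | zero => simp [hM.2.2.1]
  | succ k ih => rw [prod_range_succ, ih, weightRatio, mul_div_cancel₀ _ (hM.1 k).ne']

lemma monotone_weightRatio (hM : RegularWeightSeq M) : Monotone (weightRatio M) := by
  refine monotone_nat_of_le_succ fun k => ?_
  have hcvx := hM.2.1 (k + 1) (by omega)
  rw [Nat.add_sub_cancel] at hcvx
  rw [weightRatio, weightRatio, div_le_div_iff₀ (hM.1 k) (hM.1 (k + 1))]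
  linarith

lemma one_le_weightRatio (hM : RegularWeightSeq M) (k : ℕ) : 1 ≤ weightRatio M k :=
  calc 1 ≤ weightRatio M 0 := by simpa [weightRatio, hM.2.2.1] using hM.2.2.2.1
    _ ≤ weightRatio M k := hM.monotone_weightRatio k.zero_le

lemma tendsto_weightRatio (hM : RegularWeightSeq M) : Tendsto (weightRatio M) atTop atTop := by
  refine tendsto_atTop_mono (fun k => ?_) (hM.2.2.2.2.comp (tendsto_add_atTop_nat 1))
  have hμ : 0 ≤ weightRatio M k := zero_le_one.trans (hM.one_le_weightRatio k)
  have hle : M (k + 1) ≤ weightRatio M k ^ (k + 1) := by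
    rw [← hM.prod_range_weightRatio]
    refine (prod_le_prod (fun m _ => zero_le_one.trans (hM.one_le_weightRatio m))
      fun m hm => hM.monotone_weightRatio (Nat.lt_succ_iff.1 (mem_range.1 hm))).trans_eq ?_
    rw [prod_const, card_range]
  calc M (k + 1) ^ ((↑(k + 1) : ℝ)⁻¹)
      ≤ (weightRatio M k ^ (k + 1)) ^ ((↑(k + 1) : ℝ)⁻¹) :=
        Real.rpow_le_rpow (hM.1 _).le hle (by positivity)
    _ = weightRatio M k := Real.pow_rpow_inv_natCast hμ k.succ_ne_zero

end RegularWeightSeq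

lemma regularWeightSeq_prod_range {l : ℕ → ℝ} (hmono : Monotone l) (h1 : ∀ k, 1 ≤ l k)
    (htend : Tendsto l atTop atTop) : RegularWeightSeq (fun k => ∏ m ∈ range k, l m) := by
  have hpos : ∀ k, 0 < l k := fun k => zero_lt_one.trans_le (h1 k)
  refine ⟨fun k => prod_pos fun m _ => hpos m, fun k hk => ?_, by simp, by simpa using h1 0,
    tendsto_geomMean_atTop hpos htend⟩
  obtain ⟨n, rfl⟩ := Nat.exists_eq_add_of_le' hk
  have hP : 0 < ∏ m ∈ range n, l m := prod_pos fun m _ => hpos m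
  have hl : l n ≤ l (n + 1) := hmono n.le_succ
  simp only [prod_range_succ, Nat.add_sub_cancel]
  nlinarith [mul_le_mul_of_nonneg_left hl (mul_pos (mul_pos hP hP) (hpos n)).le]

lemma QAseq.of_weightRatio_le {L M : ℕ → ℝ} (hL : ∀ k, 0 < L k) (hM : ∀ k, 0 < M k)
    (hle : ∀ k, weightRatio L k ≤ weightRatio M k) (hqa : QAseq M) : QAseq L := by
  have hterm : ∀ N : ℕ → ℝ, (∀ k, 0 < N k) →
      ∀ k : ℕ, N k / ((k + 1) * N (k + 1)) = ((k + 1) * weightRatio N k)⁻¹ := by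
    intro N hN k
    rw [weightRatio]
    field_simp [(hN k).ne', (hN (k + 1)).ne']
  refine fun hs => hqa (hs.of_nonneg_of_le (fun k => ?_) fun k => ?_)
  · rw [hterm M hM]
    exact inv_nonneg.2 (mul_nonneg (by positivity) (div_pos (hM _) (hM k)).le)
  · rw [hterm M hM, hterm L hL]
    exact inv_anti₀ (mul_pos (by positivity) (div_pos (hL _) (hL k))) (by gcongr; exact hle k)

lemma exists_nat_monotone_tendsto_sq_le (u : ℕ → ℕ → ℝ) (hmono : ∀ j, Monotone (u j))
    (htend : ∀ j, Tendsto (u j) atTop atTop) (hu0 : ∀ k, 1 ≤ u 0 k) :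
    ∃ l : ℕ → ℕ, Monotone l ∧ Tendsto l atTop atTop ∧
      ∀ k, 1 ≤ l k ∧ ∀ j < l k, (l k : ℝ) ^ 2 ≤ u j k := by
  classical
  let P : ℕ → ℕ → Prop := fun k m => ∀ j < m, (m : ℝ) ^ 2 ≤ u j k
  have hP1 : ∀ k, P k 1 := fun k j hj => by simpa [Nat.lt_one_iff.1 hj] using hu0 k
  refine ⟨fun k => Nat.findGreatest (P k) (k + 1), fun k k' hk => ?_, ?_, fun k =>
    ⟨Nat.le_findGreatest (by omega) (hP1 k), Nat.findGreatest_spec (m := 1) (by omega) (hP1 k)⟩⟩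
  · exact Nat.findGreatest_mono (fun m hm j hj => (hm j hj).trans (hmono j hk)) (by omega)
  · refine tendsto_atTop_atTop.2 fun m => ?_
    have hev : ∀ᶠ k in atTop, P k m :=
      (Set.finite_lt_nat m).eventually_all.2 fun j _ => (htend j).eventually_ge_atTop _
    obtain ⟨K, hK⟩ := (hev.and (eventually_ge_atTop m)).exists_forall_of_atTop
    exact ⟨K, fun k hk => Nat.le_findGreatest (by linarith [(hK k hk).2]) (hK k hk).1⟩

theorem exists_regularWeightSeq_qaseq_tendsto_zero (N : ℕ → ℕ → ℝ)
    (hreg : ∀ j, RegularWeightSeq (N j)) (hqa : QAseq (N 0)) :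
    ∃ L : ℕ → ℝ, RegularWeightSeq L ∧ QAseq L ∧
      ∀ j, Tendsto (fun k : ℕ => (L k / N j k) ^ ((k : ℝ)⁻¹)) atTop (𝓝 0) := by
  obtain ⟨l, hmono, htend, hl⟩ := exists_nat_monotone_tendsto_sq_le (fun j => weightRatio (N j))
    (fun j => (hreg j).monotone_weightRatio) (fun j => (hreg j).tendsto_weightRatio)
    (hreg 0).one_le_weightRatio
  have hl1 : ∀ k, (1 : ℝ) ≤ l k := fun k => by exact_mod_cast (hl k).1
  have hL := regularWeightSeq_prod_range (l := fun k => (l k : ℝ)) (Nat.mono_cast.comp hmono)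
    hl1 (tendsto_natCast_atTop_atTop.comp htend)
  have hratio_le : ∀ k, weightRatio (fun k => ∏ m ∈ range k, (l m : ℝ)) k ≤ weightRatio (N 0) k :=
    fun k => calc
      _ = (l k : ℝ) := weightRatio_prod_range (fun k => (zero_lt_one.trans_le (hl1 k)).ne') k
      _ ≤ (l k : ℝ) ^ 2 := by nlinarith [hl1 k]
      _ ≤ weightRatio (N 0) k := (hl k).2 0 (hl k).1
  refine ⟨_, hL, QAseq.of_weightRatio_le hL.1 (hreg 0).1 hratio_le hqa, fun j => ?_⟩
  have hsmall : Tendsto (fun k => (l k : ℝ) / weightRatio (N j) k) atTop (𝓝 0) := by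
    refine squeeze_zero' (.of_forall fun k => div_nonneg (Nat.cast_nonneg _)
      (zero_le_one.trans ((hreg j).one_le_weightRatio k)))
      ?_ ((tendsto_natCast_atTop_atTop.comp htend).inv_tendsto_atTop)
    filter_upwards [htend.eventually_gt_atTop j] with k hk
    have hpos : (0 : ℝ) < l k := zero_lt_one.trans_le (hl1 k)
    calc (l k : ℝ) / weightRatio (N j) k ≤ l k / (l k : ℝ) ^ 2 :=
          div_le_div_of_nonneg_left hpos.le (by positivity) ((hl k).2 j hk)
      _ = (l k : ℝ)⁻¹ := by field_simp
  refine (tendsto_geomMean_zero (fun k => ?_) hsmall).congr fun k => ?_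
  · exact div_nonneg (Nat.cast_nonneg _) (zero_le_one.trans ((hreg j).one_le_weightRatio k))
  · rw [prod_div_distrib, (hreg j).prod_range_weightRatio]

theorem statement11_general (M : ℝ → ℕ → ℝ)
    (hreg : ∀ x : ℝ, 0 < x → RegularWeightSeq (M x))
    (hqa : ∀ x : ℝ, 0 < x → QAseq (M x))
    (hmono : ∀ x y : ℝ, 0 < x → x ≤ y → ∀ k, M x k ≤ M y k) :
    ∃ L : ℕ → ℝ, RegularWeightSeq L ∧ QAseq L ∧
      ∀ x : ℝ, 0 < x →
        Filter.Tendsto (fun k : ℕ => (L k / M x k) ^ ((k : ℝ)⁻¹))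
          Filter.atTop (nhds 0) := by
  have hpos : ∀ j : ℕ, (0 : ℝ) < 1 / ((j : ℝ) + 1) := fun j => by positivity
  obtain ⟨L, hL, hLqa, hsmall⟩ := exists_regularWeightSeq_qaseq_tendsto_zero
    (fun j => M (1 / ((j : ℝ) + 1))) (fun j => hreg _ (hpos j)) (hqa _ (hpos 0))
  refine ⟨L, hL, hLqa, fun x hx => ?_⟩
  obtain ⟨j, hj⟩ := exists_nat_one_div_lt hx
  have hnonneg : ∀ k, 0 ≤ L k / M x k := fun k => div_nonneg (hL.1 k).le ((hreg x hx).1 k).le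
  have hcmp : ∀ k, L k / M x k ≤ L k / M (1 / ((j : ℝ) + 1)) k := fun k =>
    div_le_div_of_nonneg_left (hL.1 k).le ((hreg _ (hpos j)).1 k) (hmono _ _ (hpos j) hj.le k)
  exact squeeze_zero (fun k => Real.rpow_nonneg (hnonneg k) _)
    (fun k => Real.rpow_le_rpow (hnonneg k) (hcmp k) (by positivity)) (hsmall j)

/-- Given a monotone family `{M^x}_{x>0}` of quasianalytic regular weight
sequences there is a quasianalytic regular weight sequence `L` with
`(L_k/M^x_k)^{1/k} → 0` for every `x > 0`. -/
theorem statement11 (M : ℝ → ℕ → ℝ)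
    (hreg : ∀ x : ℝ, 0 < x → RegularWeightSeq (M x))
    (hqa : ∀ x : ℝ, 0 < x → QAseq (M x))
    (hinf : ∀ x : ℝ, 0 < x →
      Filter.Tendsto (fun k : ℕ => (M x k) ^ ((k : ℝ)⁻¹)) Filter.atTop Filter.atTop)
    (hmono : ∀ x y : ℝ, 0 < x → x ≤ y → ∀ k, M x k ≤ M y k) :
    ∃ L : ℕ → ℝ, RegularWeightSeq L ∧ QAseq L ∧
      ∀ x : ℝ, 0 < x →
        Filter.Tendsto (fun k : ℕ => (L k / M x k) ^ ((k : ℝ)⁻¹))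
          Filter.atTop (nhds 0) :=
  statement11_general M hreg hqa hmono
end

section
/- Let M = (M_k) be a quasianalytic regular weight sequence and n ≥ 1. Let f ∈ C^∞(ℝⁿ) be such that for every affine line in ℝⁿ, i.e. for every a, v ∈ ℝⁿ with v ≠ 0, the function t ↦ f(a + t v) belongs to E^{M}(ℝ). If all partial derivatives of f vanish at some point a ∈ ℝⁿ (∂^α f(a) = 0 for all α ∈ ℕⁿ), then f ≡ 0 on ℝⁿ. -/
open Filter Metric Set Asymptotics
open scoped BigOperators Topology NNReal

/-!
Along the line through `a` in direction `v`, `g(t) = f(a + t v)` satisfies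
`g⁽ᵏ⁾(t) = (∂_v)ᵏ f(a + t v)`. Since partial derivatives of a smooth function commute, every
iterated partial derivative of `f`, taken in any order, vanishes at `a`; expanding `∂_v` in
coordinates shows that so do the iterated directional derivatives, hence `g` is flat at `0`.

For `g` itself (Denjoy–Carleman uniqueness) put `N_k = C ρᵏ k! M_k`, which is log-convex, so
`m_k = N_k / N_{k+1}` decreases, and `∑ m_k = ∞` by quasianalyticity. A Bang-type induction
shows `|g⁽ʲ⁾(t)| ≤ 2ʲ N_j / 2^q` whenever `4t ≤ m_{q+1} + ⋯ + m_{q+d}`: passing from `q + 1`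
to `q` across an interval of length at most `m_{q+1} / 4` is a downward induction on `j` by the
mean value theorem, where the value at the left end and the integral of `g⁽ʲ⁺¹⁾` each contribute
half of the new bound. Divergence of `∑ m_k` allows `q → ∞`, so `g(t) = 0`.
-/

section DirDeriv

variable {E F : Type*} [NormedAddCommGroup E] [NormedSpace ℝ E]
  [NormedAddCommGroup F] [NormedSpace ℝ F]

noncomputable def dirDeriv (v : E) (h : E → F) : E → F := fun x => fderiv ℝ h x v

theorem contDiff_dirDeriv {h : E → F} (hh : ContDiff ℝ (⊤ : ℕ∞) h) (v : E) :
    ContDiff ℝ (⊤ : ℕ∞) (dirDeriv v h) :=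
  (ContinuousLinearMap.apply ℝ F v).contDiff.comp (contDiff_infty_iff_fderiv.mp hh).2

theorem contDiff_iterate_dirDeriv {h : E → F} (hh : ContDiff ℝ (⊤ : ℕ∞) h) (v : E) (k : ℕ) :
    ContDiff ℝ (⊤ : ℕ∞) ((dirDeriv v)^[k] h) := by
  induction k with
  | zero => exact hh
  | succ k ih => rw [Function.iterate_succ_apply']; exact contDiff_dirDeriv ih v

theorem dirDeriv_comm {h : E → F} (hh : ContDiff ℝ (⊤ : ℕ∞) h) (u w : E) :
    dirDeriv u (dirDeriv w h) = dirDeriv w (dirDeriv u h) := by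
  funext x
  have hdf : Differentiable ℝ (fderiv ℝ h) :=
    (contDiff_infty_iff_fderiv.mp hh).2.differentiable (by simp)
  have hsecond (u w : E) : dirDeriv u (dirDeriv w h) x = fderiv ℝ (fderiv ℝ h) x u w := by
    show fderiv ℝ (fun y => fderiv ℝ h y w) x u = _
    simp [fderiv_clm_apply (hdf x) (differentiableAt_const w)]
  rw [hsecond, hsecond]
  refine hh.contDiffAt.isSymmSndFDerivAt ?_ u w
  rw [minSmoothness_of_isRCLikeNormedField]
  exact WithTop.coe_le_coe.mpr le_top

theorem iteratedDeriv_comp_line {h : E → F} (hh : ContDiff ℝ (⊤ : ℕ∞) h) (a v : E) (k : ℕ) :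
    iteratedDeriv k (fun s : ℝ => h (a + s • v)) = fun t => (dirDeriv v)^[k] h (a + t • v) := by
  induction k with
  | zero => simp
  | succ k ih =>
    funext t
    have hline : HasDerivAt (fun s : ℝ => a + s • v) v t := by
      simpa using ((hasDerivAt_id t).smul_const v).const_add a
    rw [iteratedDeriv_succ, ih, Function.iterate_succ_apply']
    have hdiff := (contDiff_iterate_dirDeriv hh v k).differentiable (by simp) (a + t • v)
    exact (hdiff.hasFDerivAt.comp_hasDerivAt t hline).deriv

end DirDeriv

section PartialDerivatives

variable {n : ℕ}

noncomputable def pderList (l : List (Fin n)) (h : Euc n → ℝ) : Euc n → ℝ := l.foldr pder h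

theorem pderList_append (l₁ l₂ : List (Fin n)) (h : Euc n → ℝ) :
    pderList (l₁ ++ l₂) h = pderList l₁ (pderList l₂ h) := by
  simp [pderList, List.foldr_append]

theorem contDiff_pderList {h : Euc n → ℝ} (hh : ContDiff ℝ (⊤ : ℕ∞) h) (l : List (Fin n)) :
    ContDiff ℝ (⊤ : ℕ∞) (pderList l h) := by
  induction l with
  | nil => exact hh
  | cons i l ih => exact contDiff_dirDeriv ih _

theorem pderList_perm {h : Euc n → ℝ} (hh : ContDiff ℝ (⊤ : ℕ∞) h) {l l' : List (Fin n)}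
    (hl : l.Perm l') : pderList l h = pderList l' h := by
  induction hl with
  | nil => rfl
  | cons i _ ih => exact congrArg (pder i) ih
  | swap i j l => exact dirDeriv_comm (contDiff_pderList hh l) _ _
  | trans _ _ ih₁ ih₂ => exact ih₁.trans ih₂

theorem pderList_dirDeriv {h : Euc n → ℝ} (hh : ContDiff ℝ (⊤ : ℕ∞) h) (v : Euc n)
    (l : List (Fin n)) : pderList l (dirDeriv v h) = dirDeriv v (pderList l h) := by
  induction l with
  | nil => rfl
  | cons i l ih =>
    change pder i (pderList l (dirDeriv v h)) = dirDeriv v (pder i (pderList l h))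
    rw [ih]
    exact dirDeriv_comm (contDiff_pderList hh l) _ _

theorem dirDeriv_eq_sum_pder (v : Euc n) (h : Euc n → ℝ) (x : Euc n) :
    dirDeriv v h x = ∑ i, v i * pder i h x := by
  conv_lhs => rw [dirDeriv, ← (EuclideanSpace.basisFun (Fin n) ℝ).sum_repr v]
  simp [pder]

theorem pderM_eq_pderList (α : Fin n → ℕ) (h : Euc n → ℝ) :
    pderM α h = pderList ((List.finRange n).flatMap fun i => List.replicate (α i) i) h := by
  unfold pderM
  induction List.finRange n with
  | nil => rfl
  | cons i L ih =>
    rw [List.foldr_cons, ih, List.flatMap_cons, pderList_append]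
    induction α i with
    | zero => rfl
    | succ m ihm => rw [Function.iterate_succ_apply', ihm]; rfl

theorem perm_flatMap_replicate_count (l : List (Fin n)) :
    l.Perm ((List.finRange n).flatMap fun i => List.replicate (l.count i) i) := by
  rw [List.perm_iff_count]
  intro j
  simp [List.count_flatMap, List.count_replicate, ← Fin.sum_univ_def]

theorem pderList_eq_zero_of_pderM_eq_zero {f : Euc n → ℝ} {a : Euc n}
    (hf : ContDiff ℝ (⊤ : ℕ∞) f) (hflat : ∀ α : Fin n → ℕ, pderM α f a = 0)
    (l : List (Fin n)) : pderList l f a = 0 := by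
  rw [pderList_perm hf (perm_flatMap_replicate_count l), ← pderM_eq_pderList]
  exact hflat _

theorem pderList_iterate_dirDeriv_eq_zero {f : Euc n → ℝ} {a : Euc n}
    (hf : ContDiff ℝ (⊤ : ℕ∞) f) (hflat : ∀ l : List (Fin n), pderList l f a = 0)
    (v : Euc n) (k : ℕ) (l : List (Fin n)) : pderList l ((dirDeriv v)^[k] f) a = 0 := by
  induction k generalizing l with
  | zero => exact hflat l
  | succ k ih =>
    rw [Function.iterate_succ_apply', pderList_dirDeriv (contDiff_iterate_dirDeriv hf v k),
      dirDeriv_eq_sum_pder]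
    exact Finset.sum_eq_zero fun i _ => mul_eq_zero_of_right _ (ih (i :: l))

end PartialDerivatives

section Quasianalytic

variable {g : ℝ → ℝ} {N : ℕ → ℝ}

theorem abs_iteratedDeriv_le_of_le_at_left (hg : ContDiff ℝ (⊤ : ℕ∞) g) {B b : ℝ} {q : ℕ}
    (hb : ∀ k, ∀ s ∈ Icc B b, |iteratedDeriv k g s| ≤ N k)
    (hstep : ∀ j ≤ q, 4 * (b - B) * N (j + 1) ≤ N j)
    (hB : ∀ j, |iteratedDeriv j g B| ≤ 2 ^ j * N j / 2 ^ (q + 1)) :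
    ∀ j, ∀ s ∈ Icc B b, |iteratedDeriv j g s| ≤ 2 ^ j * N j / 2 ^ q := by
  suffices H : ∀ r j, q + 1 ≤ j + r → ∀ s ∈ Icc B b,
      |iteratedDeriv j g s| ≤ 2 ^ j * N j / 2 ^ q from
    fun j => H (q + 1) j (by omega)
  intro r
  induction r with
  | zero =>
    intro j hj s hs
    have h2 : (2 : ℝ) ^ q ≤ 2 ^ j := pow_le_pow_right₀ one_le_two (by omega)
    have hN : 0 ≤ N j := (abs_nonneg _).trans (hb j s hs)
    calc |iteratedDeriv j g s| ≤ N j := hb j s hs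
      _ ≤ 2 ^ j * N j / 2 ^ q := by
        rw [le_div_iff₀ (by positivity), mul_comm]; exact mul_le_mul_of_nonneg_right h2 hN
  | succ r ih =>
    intro j hj s hs
    rcases le_or_gt (q + 1) j with hqj | hjq
    · exact ih j (by omega) s hs
    have hBmem : B ∈ Icc B b := ⟨le_rfl, hs.1.trans hs.2⟩
    have hN : 0 ≤ N (j + 1) := (abs_nonneg _).trans (hb (j + 1) B hBmem)
    have hderiv : ∀ u ∈ Icc B b, ‖deriv (iteratedDeriv j g) u‖ ≤ 2 ^ (j + 1) * N (j + 1) / 2 ^ q :=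
      fun u hu => by rw [← iteratedDeriv_succ]; exact ih (j + 1) (by omega) u hu
    have hmvt := Convex.norm_image_sub_le_of_norm_deriv_le
      (fun u _ => (hg.differentiable_iteratedDeriv j (by exact_mod_cast ENat.natCast_lt_top j)) u)
      hderiv (convex_Icc B b) hBmem hs
    rw [Real.norm_eq_abs, Real.norm_eq_abs, abs_of_nonneg (sub_nonneg.mpr hs.1)] at hmvt
    have hsB : 2 ^ (j + 1) * N (j + 1) / 2 ^ q * (s - B) ≤ 2 ^ j * N j / 2 ^ (q + 1) := by
      have hsj : 4 * (s - B) * N (j + 1) ≤ N j :=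
        le_trans (by nlinarith [hs.2]) (hstep j (by omega))
      rw [div_mul_eq_mul_div, div_le_div_iff₀ (by positivity) (by positivity), pow_succ, pow_succ]
      nlinarith [mul_le_mul_of_nonneg_left hsj (by positivity : (0 : ℝ) ≤ 2 ^ j * 2 ^ q)]
    calc |iteratedDeriv j g s|
        ≤ |iteratedDeriv j g B| + |iteratedDeriv j g s - iteratedDeriv j g B| := by
          simpa using abs_add_le (iteratedDeriv j g B) (iteratedDeriv j g s - iteratedDeriv j g B)
      _ ≤ 2 ^ j * N j / 2 ^ (q + 1) + 2 ^ j * N j / 2 ^ (q + 1) :=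
          add_le_add (hB j) (hmvt.trans hsB)
      _ = 2 ^ j * N j / 2 ^ q := by rw [pow_succ]; ring

theorem abs_iteratedDeriv_le_of_four_mul_le_sum (hg : ContDiff ℝ (⊤ : ℕ∞) g)
    (hNpos : ∀ k, 0 < N k) (hanti : Antitone fun k => N k / N (k + 1)) {T : ℝ}
    (hb : ∀ k, ∀ s ∈ Icc 0 T, |iteratedDeriv k g s| ≤ N k)
    (hflat : ∀ k, iteratedDeriv k g 0 = 0) (d : ℕ) :
    ∀ q, ∀ t ∈ Icc 0 T, 4 * t ≤ ∑ c ∈ Finset.range d, N (c + (q + 1)) / N (c + (q + 1) + 1) →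
      ∀ j, |iteratedDeriv j g t| ≤ 2 ^ j * N j / 2 ^ q := by
  induction d with
  | zero =>
    intro q t ht hsum j
    obtain rfl : t = 0 := by
      rw [Finset.sum_range_zero] at hsum
      linarith [ht.1]
    rw [hflat, abs_zero]
    exact div_nonneg (mul_nonneg (by positivity) (hNpos j).le) (by positivity)
  | succ d ih =>
    intro q t ht hsum j
    set S := ∑ c ∈ Finset.range d, N (c + (q + 1 + 1)) / N (c + (q + 1 + 1) + 1)
    have hsplit : ∑ c ∈ Finset.range (d + 1), N (c + (q + 1)) / N (c + (q + 1) + 1)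
        = S + N (q + 1) / N (q + 1 + 1) := by
      rw [Finset.sum_range_succ', zero_add]
      congr 1
      exact Finset.sum_congr rfl fun c _ => by ring_nf
    have hS : 0 ≤ S := Finset.sum_nonneg fun c _ => (div_pos (hNpos _) (hNpos _)).le
    rcases le_or_gt (4 * t) S with htS | htS
    · calc |iteratedDeriv j g t| ≤ 2 ^ j * N j / 2 ^ (q + 1) := ih (q + 1) t ht htS j
        _ ≤ 2 ^ j * N j / 2 ^ q :=
          div_le_div_of_nonneg_left (by have := hNpos j; positivity) (by positivity)
            (pow_le_pow_right₀ one_le_two q.le_succ)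
    · have hB : S / 4 ∈ Icc 0 T := ⟨by positivity, by linarith [ht.2]⟩
      refine abs_iteratedDeriv_le_of_le_at_left hg (B := S / 4) (b := t)
        (fun k s hs => hb k s ⟨hB.1.trans hs.1, hs.2.trans ht.2⟩) (fun i hi => ?_)
        (ih (q + 1) (S / 4) hB (by linarith)) j t ⟨by linarith, le_rfl⟩
      calc 4 * (t - S / 4) * N (i + 1) ≤ N (q + 1) / N (q + 1 + 1) * N (i + 1) := by
            gcongr
            · exact (hNpos _).le
            · linarith
        _ ≤ N i / N (i + 1) * N (i + 1) :=
            mul_le_mul_of_nonneg_right (hanti (by omega)) (hNpos _).le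
        _ = N i := div_mul_cancel₀ _ (hNpos _).ne'

theorem eq_zero_of_abs_iteratedDeriv_le (hg : ContDiff ℝ (⊤ : ℕ∞) g)
    (hNpos : ∀ k, 0 < N k) (hlogconv : ∀ k, N (k + 1) ^ 2 ≤ N k * N (k + 2))
    (hdiv : ¬ Summable fun k => N k / N (k + 1)) {T : ℝ}
    (hb : ∀ k, ∀ s ∈ Icc 0 T, |iteratedDeriv k g s| ≤ N k)
    (hflat : ∀ k, iteratedDeriv k g 0 = 0) : ∀ t ∈ Icc 0 T, g t = 0 := by
  intro t ht
  have hanti : Antitone fun k => N k / N (k + 1) := antitone_nat_of_succ_le fun k => by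
    rw [div_le_div_iff₀ (hNpos _) (hNpos _), ← sq]
    exact hlogconv k
  have hbound (q : ℕ) : |g t| ≤ N 0 * (1 / 2) ^ q := by
    have htendsto := (not_summable_iff_tendsto_nat_atTop_of_nonneg
      fun c => (div_pos (hNpos _) (hNpos _)).le).mp
      ((summable_nat_add_iff (f := fun k => N k / N (k + 1)) (q + 1)).not.mpr hdiv)
    obtain ⟨d, hd⟩ := (htendsto.eventually_ge_atTop (4 * t)).exists
    simpa [div_eq_mul_inv] using
      abs_iteratedDeriv_le_of_four_mul_le_sum hg hNpos hanti hb hflat d q t ht hd 0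
  have hlim : Tendsto (fun q : ℕ => N 0 * (1 / 2 : ℝ) ^ q) atTop (𝓝 0) := by
    simpa using (tendsto_pow_atTop_nhds_zero_of_lt_one (r := (1 / 2 : ℝ)) (by norm_num)
      (by norm_num)).const_mul (N 0)
  exact abs_nonpos_iff.mp (ge_of_tendsto' hlim hbound)

end Quasianalytic

section Weight

variable {M : ℕ → ℝ}

theorem factorial_succ_sq_le (k : ℕ) :
    ((k + 1).factorial : ℝ) ^ 2 ≤ k.factorial * (k + 2).factorial := by
  have hk : (0 : ℝ) ≤ k.factorial := by positivity
  simp only [Nat.factorial_succ, Nat.cast_mul, Nat.cast_add, Nat.cast_one]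
  nlinarith [mul_nonneg hk hk]

theorem weight_sq_le (C ρ : ℝ) (hM : ∀ k, 1 ≤ k → M k ^ 2 ≤ M (k - 1) * M (k + 1)) (k : ℕ) :
    (C * ρ ^ (k + 1) * (k + 1).factorial * M (k + 1)) ^ 2
      ≤ (C * ρ ^ k * k.factorial * M k) * (C * ρ ^ (k + 2) * (k + 2).factorial * M (k + 2)) := by
  have hMk : M (k + 1) ^ 2 ≤ M k * M (k + 2) := hM (k + 1) (by omega)
  calc (C * ρ ^ (k + 1) * (k + 1).factorial * M (k + 1)) ^ 2
      = (C * ρ ^ (k + 1)) ^ 2 * (((k + 1).factorial : ℝ) ^ 2 * M (k + 1) ^ 2) := by ring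
    _ ≤ (C * ρ ^ (k + 1)) ^ 2 * ((k.factorial * (k + 2).factorial) * (M k * M (k + 2))) := by
      gcongr
      exact factorial_succ_sq_le k
    _ = (C * ρ ^ k * k.factorial * M k) * (C * ρ ^ (k + 2) * (k + 2).factorial * M (k + 2)) := by
      ring

theorem weight_div_weight_succ {C ρ : ℝ} (hC : C ≠ 0) (hρ : ρ ≠ 0) (hMpos : ∀ k, 0 < M k)
    (k : ℕ) : (C * ρ ^ k * k.factorial * M k) / (C * ρ ^ (k + 1) * (k + 1).factorial * M (k + 1))
      = ρ⁻¹ * (M k / ((k + 1) * M (k + 1))) := by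
  have := (hMpos k).ne'
  have := (hMpos (k + 1)).ne'
  rw [Nat.factorial_succ, Nat.cast_mul, pow_succ]
  field_simp
  push_cast
  ring

end Weight

theorem Roumieu1.eq_zero_of_iteratedDeriv_eq_zero {M : ℕ → ℝ} {g : ℝ → ℝ}
    (hMpos : ∀ k, 0 < M k) (hMconv : ∀ k, 1 ≤ k → M k ^ 2 ≤ M (k - 1) * M (k + 1))
    (hQA : QAseq M) (hg : Roumieu1 M g) (hflat : ∀ k, iteratedDeriv k g 0 = 0) :
    ∀ t, 0 ≤ t → g t = 0 := by
  intro t ht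
  obtain ⟨hsmooth, hbounds⟩ := hg
  obtain ⟨ρ, hρ, C, hC⟩ := hbounds (Icc 0 t) isCompact_Icc
  set C' := max C 1
  have hC' : 0 < C' := lt_max_of_lt_right one_pos
  set N : ℕ → ℝ := fun k => C' * ρ ^ k * k.factorial * M k
  have hNpos (k : ℕ) : 0 < N k := by have := hMpos k; positivity
  have hdiv : ¬ Summable fun k => N k / N (k + 1) := fun hs => hQA <| by
    simpa [N, weight_div_weight_succ hC'.ne' hρ.ne' hMpos, hρ.ne'] using hs.mul_left ρ
  have hb (k : ℕ) : ∀ s ∈ Icc 0 t, |iteratedDeriv k g s| ≤ N k := fun s hs =>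
    (hC s hs k).trans <| by
      have := hMpos k
      simp only [N]
      gcongr
      exact le_max_left C 1
  exact eq_zero_of_abs_iteratedDeriv_le hsmooth hNpos (weight_sq_le C' ρ hMconv) hdiv hb hflat
    t ⟨ht, le_rfl⟩

theorem iteratedDeriv_line_eq_zero {n : ℕ} {f : Euc n → ℝ} {a : Euc n}
    (hf : ContDiff ℝ (⊤ : ℕ∞) f) (hflat : ∀ α : Fin n → ℕ, pderM α f a = 0) (v : Euc n) (k : ℕ) :
    iteratedDeriv k (fun t : ℝ => f (a + t • v)) 0 = 0 := by
  simp only [iteratedDeriv_comp_line hf, zero_smul, add_zero]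
  exact pderList_iterate_dirDeriv_eq_zero hf (pderList_eq_zero_of_pderM_eq_zero hf hflat) v k []

theorem statement12_general (M : ℕ → ℝ) (hM : RegularWeightSeq M) (hQA : QAseq M)
    (n : ℕ) (f : Euc n → ℝ) (hf : ContDiff ℝ (⊤ : ℕ∞) f)
    (hline : ∀ a v : Euc n, v ≠ 0 → Roumieu1 M fun t : ℝ => f (a + t • v))
    (a : Euc n) (hflat : ∀ α : Fin n → ℕ, pderM α f a = 0) :
    ∀ x, f x = 0 := by
  obtain ⟨hMpos, hMconv, -⟩ := hM
  intro x
  rcases eq_or_ne x a with rfl | hxa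
  · exact pderList_eq_zero_of_pderM_eq_zero hf hflat []
  · have hg := hline a (x - a) (sub_ne_zero.mpr hxa)
    simpa using hg.eq_zero_of_iteratedDeriv_eq_zero hMpos hMconv hQA
      (iteratedDeriv_line_eq_zero hf hflat (x - a)) 1 zero_le_one

/-- Quasianalyticity of the class `Ā_1^{M}`: a smooth function which is of
class `E^{M}` along all affine lines and is infinitely flat at a point
vanishes identically. -/
theorem statement12 (M : ℕ → ℝ) (hM : RegularWeightSeq M) (hQA : QAseq M)
    (n : ℕ) (hn : 1 ≤ n) (f : Euc n → ℝ) (hf : ContDiff ℝ (⊤ : ℕ∞) f)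
    (hline : ∀ a v : Euc n, v ≠ 0 → Roumieu1 M fun t : ℝ => f (a + t • v))
    (a : Euc n) (hflat : ∀ α : Fin n → ℕ, pderM α f a = 0) :
    ∀ x, f x = 0 :=
  statement12_general M hM hQA n f hf hline a hflat
end

section
/- Let M = (M_k) be a quasianalytic regular weight sequence and f ∈ A_{n-1}^{M}(ℝⁿ) \ A_n^{M}(ℝⁿ) for some n ≥ 2. Then for every k ≥ 1 the function f̃ on ℝ^{n+k} defined by f̃(x_1, …, x_n, x_{n+1}, …, x_{n+k}) := f(x_1, …, x_n) belongs to A_{n-1}^{M}(ℝ^{n+k}) but not to A_n^{M}(ℝ^{n+k}). -/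
open Filter Metric Set Asymptotics
open scoped BigOperators Topology NNReal

/-!
`f̃ = f ∘ π` for the coordinate projection `π : ℝ^{n+k} → ℝⁿ`, and `f = f̃ ∘ ι` for the
extension by zero `ι : ℝⁿ → ℝ^{n+k}`. Both maps are smooth and send `E^{M}`-plots to
`E^{M}`-plots (the components of `π ∘ p` are components of `p`, those of `ι ∘ q` are
components of `q` or zero), and `A_m^{M}` is stable under precomposition with such maps.
-/

def PreservesRoumieuPlots (M : ℕ → ℝ) (m : ℕ) {n N : ℕ} (φ : Euc n → Euc N) : Prop :=
  ∀ (V : Set (Euc m)) (q : Euc m → Euc n), IsOpen V →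
    (∀ i, Roumieu M V fun x => q x i) → ∀ j, Roumieu M V fun x => φ (q x) j

theorem AClass.comp_univ {M : ℕ → ℝ} {m n N : ℕ} {g : Euc N → ℝ} {φ : Euc n → Euc N}
    (hg : AClass M m univ g) (hφ : ContDiff ℝ (⊤ : ℕ∞) φ)
    (hφM : PreservesRoumieuPlots M m φ) : AClass M m univ (g ∘ φ) :=
  ⟨(contDiffOn_univ.mp hg.1).comp hφ |>.contDiffOn, fun V q hV _ hq =>
    hg.2 V (φ ∘ q) hV (mapsTo_univ _ _) (hφM V q hV hq)⟩

theorem pderM_zero {n : ℕ} (α : Fin n → ℕ) : pderM α (fun _ => (0 : ℝ)) = fun _ => 0 := by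
  have hpder : ∀ i : Fin n, pder i (fun _ => (0 : ℝ)) = fun _ => 0 := fun i => by
    funext x; simp [pder]
  unfold pderM
  induction List.finRange n with
  | nil => rfl
  | cons i l ih => rw [List.foldr_cons, ih, Function.iterate_fixed (hpder i)]

theorem roumieu_zero {m : ℕ} (M : ℕ → ℝ) (V : Set (Euc m)) :
    Roumieu M V fun _ => (0 : ℝ) :=
  ⟨contDiffOn_const, fun _ _ _ => ⟨1, one_pos, 0, fun _ _ _ => by simp [pderM_zero]⟩⟩

def reindex {n N : ℕ} (σ : Fin n → Fin N) (x : Euc N) : Euc n :=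
  (WithLp.equiv 2 (Fin n → ℝ)).symm fun i => x (σ i)

theorem contDiff_reindex {n N : ℕ} (σ : Fin n → Fin N) :
    ContDiff ℝ (⊤ : ℕ∞) (reindex σ) :=
  contDiff_euclidean.mpr fun i => (EuclideanSpace.proj (𝕜 := ℝ) (σ i)).contDiff

theorem preservesRoumieuPlots_reindex (M : ℕ → ℝ) (m : ℕ) {n N : ℕ} (σ : Fin n → Fin N) :
    PreservesRoumieuPlots M m (reindex σ) :=
  fun _ _ _ hq i => hq (σ i)

def extendByZero (n k : ℕ) (y : Euc n) : Euc (n + k) :=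
  (WithLp.equiv 2 (Fin (n + k) → ℝ)).symm (Fin.addCases (motive := fun _ => ℝ) y fun _ => 0)

theorem contDiff_extendByZero (n k : ℕ) : ContDiff ℝ (⊤ : ℕ∞) (extendByZero n k) := by
  refine contDiff_euclidean.mpr fun j => Fin.addCases (fun i => ?_) (fun i => ?_) j
  · simpa [extendByZero] using (EuclideanSpace.proj (𝕜 := ℝ) i).contDiff
  · simpa [extendByZero] using contDiff_const

theorem preservesRoumieuPlots_extendByZero (M : ℕ → ℝ) (m n k : ℕ) :
    PreservesRoumieuPlots M m (extendByZero n k) := by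
  intro V q _ hq j
  refine Fin.addCases (fun i => ?_) (fun i => ?_) j
  · simpa [extendByZero] using hq i
  · simpa [extendByZero] using roumieu_zero M V

theorem reindex_castAdd_extendByZero (n k : ℕ) (y : Euc n) :
    reindex (Fin.castAdd k) (extendByZero n k y) = y := by
  ext i; simp [reindex, extendByZero]

theorem statement14_general (M : ℕ → ℝ)
    (n : ℕ) (f : Euc n → ℝ)
    (hf1 : AClass M (n - 1) (Set.univ : Set (Euc n)) f)
    (hf2 : ¬ AClass M n (Set.univ : Set (Euc n)) f)
    (k : ℕ) :
    letI ftil : Euc (n + k) → ℝ := fun x =>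
      f ((WithLp.equiv 2 (Fin n → ℝ)).symm fun i : Fin n => x (Fin.castAdd k i))
    AClass M (n - 1) (Set.univ : Set (Euc (n + k))) ftil ∧
      ¬ AClass M n (Set.univ : Set (Euc (n + k))) ftil := by
  refine ⟨hf1.comp_univ (contDiff_reindex _) (preservesRoumieuPlots_reindex M _ _),
    fun hA => hf2 ?_⟩
  have hf : f = (f ∘ reindex (Fin.castAdd k)) ∘ extendByZero n k := by
    funext y; simp [reindex_castAdd_extendByZero]
  rw [hf]
  exact hA.comp_univ (contDiff_extendByZero n k) (preservesRoumieuPlots_extendByZero M n n k)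

/-- Adding dummy variables preserves membership in `A_{n-1}^{M}` and
non-membership in `A_n^{M}`. -/
theorem statement14 (M : ℕ → ℝ) (hM : RegularWeightSeq M) (hQA : QAseq M)
    (n : ℕ) (hn : 2 ≤ n) (f : Euc n → ℝ)
    (hf1 : AClass M (n - 1) (Set.univ : Set (Euc n)) f)
    (hf2 : ¬ AClass M n (Set.univ : Set (Euc n)) f)
    (k : ℕ) (hk : 1 ≤ k) :
    letI ftil : Euc (n + k) → ℝ := fun x =>
      f ((WithLp.equiv 2 (Fin n → ℝ)).symm fun i : Fin n => x (Fin.castAdd k i))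
    AClass M (n - 1) (Set.univ : Set (Euc (n + k))) ftil ∧
      ¬ AClass M n (Set.univ : Set (Euc (n + k))) ftil :=
  statement14_general M n f hf1 hf2 k
end

section
/- Let M = (M_k) be a quasianalytic regular weight sequence, let U ⊆ ℝⁿ be an open neighborhood of 0, let 1 ≤ m, and let f ∈ A_m^{M}(U) with f(0) ≠ 0. Then there is an open neighborhood W ⊆ U of 0 on which f does not vanish and such that 1/f ∈ A_m^{M}(W). -/
open Filter Metric Set Asymptotics
open scoped BigOperators Topology NNReal

noncomputable section Comb

/-! ### Splittings of a list (for the Leibniz rule) -/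

def splits {ι : Type*} : List ι → List (List ι × List ι)
  | [] => [([], [])]
  | i :: L => (splits L).flatMap fun s => [(i :: s.1, s.2), (s.1, i :: s.2)]

lemma splits_mem {ι : Type*} : ∀ (L : List ι) (s : List ι × List ι), s ∈ splits L →
    s.1.length + s.2.length = L.length ∧ s.1.Sublist L ∧ s.2.Sublist L := by
  intro L
  induction L with
  | nil => intro s hs; simp [splits] at hs; simp [hs]
  | cons i L ih =>
    intro s hs
    simp only [splits, List.mem_flatMap] at hs
    obtain ⟨t, ht, hst⟩ := hs
    obtain ⟨hlen, h1, h2⟩ := ih t ht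
    simp only [List.mem_cons, List.mem_singleton] at hst
    rcases hst with rfl | hst
    · refine ⟨by show (i :: t.1).length + t.2.length = (i :: L).length; simp only [List.length_cons]; omega, List.Sublist.cons₂ _ h1, List.Sublist.cons _ h2⟩
    · rcases hst with rfl | hst
      swap
      · simp at hst
      exact ⟨by show t.1.length + (i :: t.2).length = (i :: L).length; simp only [List.length_cons]; omega, List.Sublist.cons _ h1, List.Sublist.cons₂ _ h2⟩

lemma splits_sum_weight {ι : Type*} :
    ∀ (L : List ι) (w : ℕ → ℝ),
    ((splits L).map (fun s => w s.1.length)).sum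
      = ∑ j ∈ Finset.range (L.length + 1), (L.length.choose j : ℝ) * w j := by
  intro L
  induction L with
  | nil => intro w; simp [splits]
  | cons i L ih =>
    intro w
    have expand : ((splits (i :: L)).map (fun s => w s.1.length)).sum
        = ((splits L).map (fun s => w (s.1.length + 1) + w s.1.length)).sum := by
      simp only [splits]
      induction splits L with
      | nil => simp
      | cons t ts iht => simp_all [List.flatMap_cons]; ring
    have ihs := ih (fun j => w (j+1))
    rw [expand, List.sum_map_add, ihs, ih w]
    set k := L.length
    simp only [List.length_cons]
    rw [Finset.sum_range_succ' (fun j => ((k+1).choose j : ℝ) * w j) (k+1)]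
    have step : ∀ j, ((k+1).choose (j+1) : ℝ) = (k.choose j : ℝ) + (k.choose (j+1) : ℝ) := by
      intro j; rw [Nat.choose_succ_succ]; push_cast; ring
    have e1 : ∑ j ∈ Finset.range (k+1), ((k+1).choose (j+1) : ℝ) * w (j+1)
        = ∑ j ∈ Finset.range (k+1), ((k.choose j : ℝ) * w (j+1) + (k.choose (j+1) : ℝ) * w (j+1)) := by
      refine Finset.sum_congr rfl fun j _ => ?_
      rw [step]; ring
    rw [e1, Finset.sum_add_distrib]
    have e2 : ∑ j ∈ Finset.range (k+1), (k.choose (j+1) : ℝ) * w (j+1)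
        = ∑ j ∈ Finset.range k, (k.choose (j+1) : ℝ) * w (j+1) := by
      rw [Finset.sum_range_succ]; simp
    have e3 : ∑ j ∈ Finset.range (k+1), (k.choose j : ℝ) * w j
        = ∑ j ∈ Finset.range k, (k.choose (j+1) : ℝ) * w (j+1) + (k.choose 0 : ℝ) * w 0 := by
      rw [Finset.sum_range_succ' (fun j => (k.choose j : ℝ) * w j) k]
    rw [e2, e3]
    simp only [Nat.choose_zero_right, Nat.cast_one, one_mul]
    ring

lemma splits_sum_nilterm {ι : Type*} [DecidableEq ι] :
    ∀ (L : List ι) (G : List ι × List ι → ℝ),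
    ((splits L).map (fun s => if s.1 = [] then G s else 0)).sum = G ([], L) := by
  intro L
  induction L with
  | nil => simp [splits]
  | cons i L ih =>
    intro G
    have expand : ((splits (i :: L)).map (fun s => if s.1 = [] then G s else 0)).sum
        = ((splits L).map (fun s => if s.1 = [] then G (s.1, i :: s.2) else 0)).sum := by
      simp only [splits]
      induction splits L with
      | nil => simp
      | cons t ts iht => simp_all [List.flatMap_cons]
    rw [expand, ih (fun s => G (s.1, i :: s.2))]

lemma list_abs_sum_le {ι : Type*} (l : List ι) (F W : ι → ℝ)
    (h : ∀ s ∈ l, |F s| ≤ W s) :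
    |(l.map F).sum| ≤ (l.map W).sum := by
  induction l with
  | nil => simp
  | cons a l ih =>
    simp only [List.map_cons, List.sum_cons]
    calc |F a + (l.map F).sum| ≤ |F a| + |(l.map F).sum| := abs_add_le _ _
      _ ≤ W a + (l.map W).sum := by
          gcongr
          · exact h a List.mem_cons_self
          · exact ih fun s hs => h s (List.mem_cons_of_mem _ hs)

end Comb


noncomputable section AuxAnalysis

/-! ### Iterated directional derivatives along a list -/

def DL {n : ℕ} (L : List (Fin n)) (f : Euc n → ℝ) : Euc n → ℝ :=
  L.foldr (fun i g => pder i g) f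

@[simp] lemma DL_nil {n : ℕ} (f : Euc n → ℝ) : DL [] f = f := rfl

@[simp] lemma DL_cons {n : ℕ} (i : Fin n) (L : List (Fin n)) (f : Euc n → ℝ) :
    DL (i :: L) f = pder i (DL L f) := rfl

lemma DL_append {n : ℕ} (L₁ L₂ : List (Fin n)) (f : Euc n → ℝ) :
    DL (L₁ ++ L₂) f = DL L₁ (DL L₂ f) := List.foldr_append ..

lemma DL_replicate {n : ℕ} (k : ℕ) (i : Fin n) (f : Euc n → ℝ) :
    DL (List.replicate k i) f = (pder i)^[k] f := by
  induction k with
  | zero => rfl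
  | succ k ih => rw [List.replicate_succ, DL_cons, ih, Function.iterate_succ_apply']

/-- The canonical (sorted) list associated to a multi-index. -/
def cl {n : ℕ} (α : Fin n → ℕ) : List (Fin n) :=
  (List.finRange n).flatMap fun i => List.replicate (α i) i

lemma pderM_eq_DL {n : ℕ} (α : Fin n → ℕ) (f : Euc n → ℝ) :
    pderM α f = DL (cl α) f := by
  show (List.finRange n).foldr (fun i g => (pder i)^[α i] g) f = _
  unfold cl
  induction List.finRange n with
  | nil => rfl
  | cons i l ih =>
    rw [List.foldr_cons, ih, List.flatMap_cons, DL_append, DL_replicate]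

lemma length_cl {n : ℕ} (α : Fin n → ℕ) : (cl α).length = mdeg α := by
  unfold cl mdeg
  rw [List.length_flatMap, Fin.sum_univ_def]
  congr 1
  simp [Function.comp]

lemma mdeg_count {n : ℕ} (a : List (Fin n)) : mdeg (fun i => a.count i) = a.length := by
  unfold mdeg
  induction a with
  | nil => simp
  | cons x t ih =>
    simp only [List.count_cons, List.length_cons]
    rw [Finset.sum_add_distrib, ih]
    congr 1
    simp [beq_iff_eq]

lemma pderM_zero_s15 {n : ℕ} (α : Fin n → ℕ) (hα : ∀ i, α i = 0) (f : Euc n → ℝ) :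
    pderM α f = f := by
  show (List.finRange n).foldr (fun i g => (pder i)^[α i] g) f = f
  induction List.finRange n with
  | nil => rfl
  | cons i l ih => rw [List.foldr_cons, ih, hα, Function.iterate_zero_apply]

/-! ### Sorted lists are canonical -/

lemma clL_pairwise' {n : ℕ} (α : Fin n → ℕ) :
    ∀ l : List (Fin n), l.Pairwise (· < ·) →
    (l.flatMap fun i => List.replicate (α i) i).Pairwise (· ≤ ·) := by
  intro l
  induction l with
  | nil => simp
  | cons i l ih =>
    intro h
    rw [List.pairwise_cons] at h
    rw [List.flatMap_cons, List.pairwise_append]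
    refine ⟨?_, ih h.2, ?_⟩
    · rw [List.pairwise_replicate]; right; exact le_refl i
    · intro a ha b hb
      rw [List.eq_of_mem_replicate ha]
      rw [List.mem_flatMap] at hb
      obtain ⟨j, hj, hb⟩ := hb
      rw [List.eq_of_mem_replicate hb]
      exact (h.1 j hj).le

lemma cl_pairwise {n : ℕ} (α : Fin n → ℕ) : (cl α).Pairwise (· ≤ ·) :=
  clL_pairwise' α _ (List.pairwise_lt_finRange n)

/-- `clL` over a general index list. -/
def clL {n : ℕ} (l : List (Fin n)) (γ : Fin n → ℕ) : List (Fin n) :=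
  l.flatMap fun i => List.replicate (γ i) i

lemma clL_congr {n : ℕ} (l : List (Fin n)) {γ δ : Fin n → ℕ}
    (h : ∀ i ∈ l, γ i = δ i) :
    (l.flatMap fun i => List.replicate (γ i) i) = l.flatMap fun i => List.replicate (δ i) i := by
  induction l with
  | nil => rfl
  | cons i l ih =>
    rw [List.flatMap_cons, List.flatMap_cons, h i List.mem_cons_self,
      ih fun j hj => h j (List.mem_cons_of_mem _ hj)]

lemma clL_cons_of {n : ℕ} (x : Fin n) (γ : Fin n → ℕ) :
    ∀ l : List (Fin n), l.Pairwise (· < ·) → x ∈ l → (∀ i ∈ l, i < x → γ i = 0) →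
    clL l (fun i => if i = x then γ i + 1 else γ i) = x :: clL l γ := by
  intro l
  induction l with
  | nil => intro _ h; simp at h
  | cons y l ih =>
    intro hp hx h0
    rw [List.pairwise_cons] at hp
    by_cases hyx : y = x
    · subst hyx
      have hynl : ∀ i ∈ l, i ≠ y := fun i hi => (hp.1 i hi).ne'
      unfold clL
      rw [List.flatMap_cons, List.flatMap_cons]
      beta_reduce
      rw [if_pos rfl, List.replicate_succ]
      rw [clL_congr l (δ := γ) (fun i hi => if_neg (hynl i hi))]
      rfl
    · have hxl : x ∈ l := by
        rcases List.mem_cons.mp hx with h | h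
        · exact absurd h.symm hyx
        · exact h
      have hylt : y < x := hp.1 x hxl
      have hy0 : γ y = 0 := h0 y List.mem_cons_self hylt
      unfold clL
      rw [List.flatMap_cons, List.flatMap_cons]
      beta_reduce
      rw [if_neg hyx, hy0]
      simp only [List.replicate_zero, List.nil_append]
      exact ih hp.2 hxl fun i hi hlt => h0 i (List.mem_cons_of_mem _ hi) hlt

lemma sorted_eq_cl {n : ℕ} : ∀ a : List (Fin n), a.Pairwise (· ≤ ·) →
    a = cl (fun i => a.count i) := by
  intro a
  induction a with
  | nil =>
    intro _
    unfold cl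
    induction List.finRange n with
    | nil => rfl
    | cons i l ih =>
      rw [List.flatMap_cons]
      simp only [List.count_nil, List.replicate_zero, List.nil_append]
      exact ih
  | cons x t ih =>
    intro hp
    rw [List.pairwise_cons] at hp
    have ht := ih hp.2
    have hcount : (fun i => (x :: t).count i) =
        fun i => if i = x then t.count i + 1 else t.count i := by
      funext i
      rw [List.count_cons]
      by_cases hix : i = x
      · subst hix; simp
      · simp [beq_iff_eq, Ne.symm hix, hix]
    show x :: t = clL (List.finRange n) _
    rw [hcount]
    rw [clL_cons_of x (fun i => t.count i) (List.finRange n)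
      ((List.pairwise_lt_finRange n)) (List.mem_finRange x) ?_]
    · show x :: t = x :: cl fun i => List.count i t
      rw [← ht]
    · intro i _ hilt
      rw [List.count_eq_zero]
      intro hit
      exact absurd (hp.1 i hit) (not_le.mpr hilt)

lemma sublist_cl_eq {n : ℕ} {α : Fin n → ℕ} {a : List (Fin n)} (h : a.Sublist (cl α)) :
    a = cl (fun i => a.count i) :=
  sorted_eq_cl a (List.Pairwise.sublist h (cl_pairwise α))

end AuxAnalysis


noncomputable section AuxCalc

lemma pder_congr {n : ℕ} {V : Set (Euc n)} (hV : IsOpen V) {F G : Euc n → ℝ}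
    (h : Set.EqOn F G V) (i : Fin n) {x : Euc n} (hx : x ∈ V) :
    pder i F x = pder i G x := by
  unfold pder
  rw [(h.eventuallyEq_of_mem (hV.mem_nhds hx)).fderiv_eq]

lemma DL_congr {n : ℕ} {V : Set (Euc n)} (hV : IsOpen V) {F G : Euc n → ℝ}
    (h : Set.EqOn F G V) (L : List (Fin n)) : Set.EqOn (DL L F) (DL L G) V := by
  induction L with
  | nil => exact h
  | cons i L ih => exact fun x hx => pder_congr hV ih i hx

lemma pder_const {n : ℕ} (i : Fin n) (c : ℝ) : pder i (fun _ => c) = fun _ => 0 := by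
  funext x
  simp [pder]

lemma DL_one {n : ℕ} : ∀ L : List (Fin n), L ≠ [] → DL L (fun _ => (1:ℝ)) = fun _ => 0 := by
  intro L
  induction L with
  | nil => intro h; exact absurd rfl h
  | cons i L ih =>
    intro _
    rcases L with - | ⟨j, L'⟩
    · rw [DL_cons, DL_nil, pder_const]
    · rw [DL_cons, ih (List.cons_ne_nil j L'), pder_const]

lemma pder_contDiffOn {n : ℕ} {V : Set (Euc n)} (hV : IsOpen V) {F : Euc n → ℝ}
    (hF : ContDiffOn ℝ (⊤ : ℕ∞) F V) (i : Fin n) :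
    ContDiffOn ℝ (⊤ : ℕ∞) (pder i F) V := by
  have h1 : ContDiffOn ℝ (⊤ : ℕ∞) (fderiv ℝ F) V :=
    hF.fderiv_of_isOpen hV (by simp)
  exact h1.clm_apply contDiffOn_const

lemma DL_contDiffOn {n : ℕ} {V : Set (Euc n)} (hV : IsOpen V) {F : Euc n → ℝ}
    (hF : ContDiffOn ℝ (⊤ : ℕ∞) F V) (L : List (Fin n)) :
    ContDiffOn ℝ (⊤ : ℕ∞) (DL L F) V := by
  induction L with
  | nil => exact hF
  | cons i L ih => exact pder_contDiffOn hV ih i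

lemma DL_differentiableAt {n : ℕ} {V : Set (Euc n)} (hV : IsOpen V) {F : Euc n → ℝ}
    (hF : ContDiffOn ℝ (⊤ : ℕ∞) F V) (L : List (Fin n)) {x : Euc n} (hx : x ∈ V) :
    DifferentiableAt ℝ (DL L F) x :=
  ((DL_contDiffOn hV hF L).contDiffAt (hV.mem_nhds hx)).differentiableAt (by simp)

lemma differentiableAt_list_sum {n : ℕ} {γ : Type*} (l : List γ) (u : γ → Euc n → ℝ)
    {x : Euc n} (hu : ∀ s ∈ l, DifferentiableAt ℝ (u s) x) :
    DifferentiableAt ℝ (fun y => ((l.map fun s => u s y)).sum) x := by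
  induction l with
  | nil => simpa using differentiableAt_const (0:ℝ)
  | cons a l ih =>
    simp only [List.map_cons, List.sum_cons]
    exact (hu a List.mem_cons_self).add
      (ih fun s hs => hu s (List.mem_cons_of_mem _ hs))

lemma pder_list_sum {n : ℕ} {γ : Type*} (i : Fin n) (l : List γ) (u : γ → Euc n → ℝ)
    {x : Euc n} (hu : ∀ s ∈ l, DifferentiableAt ℝ (u s) x) :
    pder i (fun y => ((l.map fun s => u s y)).sum) x = ((l.map fun s => pder i (u s) x)).sum := by
  induction l with
  | nil => simp [pder_const i 0]
  | cons a l ih =>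
    simp only [List.map_cons, List.sum_cons]
    have hrest : DifferentiableAt ℝ (fun y => ((l.map fun s => u s y)).sum) x :=
      differentiableAt_list_sum l u fun s hs => hu s (List.mem_cons_of_mem _ hs)
    have : pder i (fun y => u a y + ((l.map fun s => u s y)).sum) x
        = pder i (u a) x + pder i (fun y => ((l.map fun s => u s y)).sum) x := by
      unfold pder
      rw [fderiv_fun_add (hu a List.mem_cons_self) hrest]
      simp
    rw [this, ih fun s hs => hu s (List.mem_cons_of_mem _ hs)]

lemma pder_mul {n : ℕ} (i : Fin n) {F G : Euc n → ℝ} {x : Euc n}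
    (hF : DifferentiableAt ℝ F x) (hG : DifferentiableAt ℝ G x) :
    pder i (fun y => F y * G y) x = F x * pder i G x + G x * pder i F x := by
  unfold pder
  rw [fderiv_fun_mul hF hG]
  simp

lemma sum_map_flatMap {γ δ : Type*} (l : List γ) (f : γ → List δ) (g : δ → ℝ) :
    (((l.flatMap f).map g)).sum = ((l.map fun a => (((f a).map g)).sum)).sum := by
  induction l with
  | nil => simp
  | cons a l ih => simp [List.flatMap_cons, ih]

lemma leibniz {n : ℕ} {V : Set (Euc n)} (hV : IsOpen V) {F G : Euc n → ℝ}
    (hF : ContDiffOn ℝ (⊤ : ℕ∞) F V) (hG : ContDiffOn ℝ (⊤ : ℕ∞) G V) :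
    ∀ (L : List (Fin n)) (x : Euc n), x ∈ V →
      DL L (fun y => F y * G y) x = ((splits L).map fun s => DL s.1 F x * DL s.2 G x).sum := by
  intro L
  induction L with
  | nil => intro x hx; simp [splits]
  | cons i L ih =>
    intro x hx
    have hEq : Set.EqOn (DL L fun y => F y * G y)
        (fun y => ((splits L).map fun s => DL s.1 F y * DL s.2 G y).sum) V :=
      fun y hy => ih y hy
    have hdiff : ∀ s ∈ splits L, DifferentiableAt ℝ (fun y => DL s.1 F y * DL s.2 G y) x :=
      fun s _ => (DL_differentiableAt hV hF s.1 hx).mul (DL_differentiableAt hV hG s.2 hx)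
    rw [DL_cons, pder_congr hV hEq i hx,
      pder_list_sum i (splits L) (fun s => fun y => DL s.1 F y * DL s.2 G y) hdiff]
    have hterm : ∀ s ∈ splits L,
        pder i (fun y => DL s.1 F y * DL s.2 G y) x
          = (DL (i :: s.1) F x * DL s.2 G x + (DL s.1 F x * DL (i :: s.2) G x + 0)) := by
      intro s _
      rw [pder_mul i (DL_differentiableAt hV hF s.1 hx) (DL_differentiableAt hV hG s.2 hx)]
      simp only [DL_cons, add_zero]
      ring
    rw [List.map_congr_left hterm]
    show _ = ((splits (i :: L)).map fun s => DL s.1 F x * DL s.2 G x).sum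
    simp only [splits]
    rw [sum_map_flatMap]
    exact congrArg List.sum (List.map_congr_left fun s _ => by simp)

end AuxCalc


noncomputable section AuxMain

lemma M_superadd {M : ℕ → ℝ} (hM : RegularWeightSeq M) :
    ∀ a b : ℕ, M a * M b ≤ M (a + b) := by
  obtain ⟨hpos, hlc, hM0, -, -⟩ := hM
  set r : ℕ → ℝ := fun k => M (k+1) / M k with hr
  have hrpos : ∀ k, 0 < r k := fun k => div_pos (hpos (k+1)) (hpos k)
  have hrmono : Monotone r := by
    apply monotone_nat_of_le_succ
    intro k
    have h := hlc (k+1) (Nat.le_add_left 1 k)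
    simp only [Nat.add_sub_cancel] at h
    rw [hr]
    rw [div_le_div_iff₀ (hpos k) (hpos (k+1))]
    nlinarith [h, hpos k, hpos (k+1), hpos (k+2)]
  have hprod : ∀ (a b : ℕ), M (b + a) = M b * ∏ i ∈ Finset.range a, r (b + i) := by
    intro a b
    induction a with
    | zero => simp
    | succ a ih =>
      rw [Finset.prod_range_succ, ← mul_assoc, ← ih, ← Nat.add_assoc]
      rw [hr]
      field_simp
      exact (mul_div_cancel_right₀ _ (ne_of_gt (hpos (b+a)))).symm
  intro a b
  have h1 : M a = ∏ i ∈ Finset.range a, r i := by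
    have := hprod a 0
    simpa [hM0] using this
  have h2 : M (a + b) = M b * ∏ i ∈ Finset.range a, r (b + i) := by
    rw [Nat.add_comm a b]; exact hprod a b
  rw [h1, h2, mul_comm]
  exact mul_le_mul_of_nonneg_left (Finset.prod_le_prod (fun i _ => (hrpos i).le)
    (fun i _ => hrmono (Nat.le_add_left i b))) (hpos b).le

lemma roumieu_inv {n : ℕ} {M : ℕ → ℝ} (hM : RegularWeightSeq M) {V : Set (Euc n)}
    (hV : IsOpen V) {g : Euc n → ℝ} (hg : Roumieu M V g) (hnz : ∀ x ∈ V, g x ≠ 0) :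
    Roumieu M V (fun x => (g x)⁻¹) := by
  have hMpos := hM.1
  have hM0 : M 0 = 1 := hM.2.2.1
  have hsmooth : ContDiffOn ℝ (⊤ : ℕ∞) (fun x => (g x)⁻¹) V := hg.1.inv hnz
  refine ⟨hsmooth, ?_⟩
  intro K hKV hK
  rcases K.eq_empty_or_nonempty with rfl | ⟨x₀, hx₀⟩
  · exact ⟨1, one_pos, 0, fun x hx => absurd hx (Set.notMem_empty x)⟩
  obtain ⟨ρ, hρ, C, hC⟩ := hg.2 K hKV hK
  obtain ⟨z, hzK, hz⟩ := hK.exists_isMinOn ⟨x₀, hx₀⟩ ((hg.1.continuousOn.mono hKV).abs)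
  set c := |g z| with hc_def
  have hc : 0 < c := abs_pos.mpr (hnz z (hKV hzK))
  have hcg : ∀ x ∈ K, c ≤ |g x| := fun x hx => hz hx
  have hCge : c ≤ C := by
    have h0 := hC z hzK (fun _ => 0)
    rw [pderM_zero_s15 _ (fun i => rfl)] at h0
    have : mdeg (fun _ : Fin n => 0) = 0 := by simp [mdeg]
    rw [this] at h0
    simpa [hM0] using h0
  have hCpos : 0 < C := lt_of_lt_of_le hc hCge
  obtain ⟨A, hApos, hcA, hAinv⟩ : ∃ A : ℝ, 0 < A ∧ c * A = 1 ∧ A = c⁻¹ :=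
    ⟨c⁻¹, inv_pos.mpr hc, mul_inv_cancel₀ (ne_of_gt hc), rfl⟩
  obtain ⟨B, hBpos, hB2ρ, hstep⟩ : ∃ B : ℝ, 0 < B ∧ 2*ρ ≤ B ∧ 2*ρ*C ≤ c*B := by
    refine ⟨2*ρ*C/c + 2*ρ, ?_, ?_, ?_⟩
    · have : 0 < 2*ρ*C/c := by positivity
      linarith
    · have : 0 ≤ 2*ρ*C/c := by positivity
      linarith
    · have hcc : c ≠ 0 := ne_of_gt hc
      have he : c * (2*ρ*C/c + 2*ρ) = 2*ρ*C + 2*ρ*c := by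
        field_simp
      rw [he]
      nlinarith [mul_pos hρ hc]
  set h := fun x => (g x)⁻¹ with hh_def
  have key : ∀ k : ℕ, ∀ α : Fin n → ℕ, mdeg α = k → ∀ x ∈ K,
      |pderM α h x| ≤ A * B ^ k * k.factorial * M k := by
    intro k
    induction k using Nat.strong_induction_on with
    | _ k IH =>
    intro α hα x hx
    rcases Nat.eq_zero_or_pos k with rfl | hk
    · have hα0 : ∀ i, α i = 0 := fun i =>
        (Finset.sum_eq_zero_iff.mp hα) i (Finset.mem_univ i)
      rw [pderM_zero_s15 α hα0]
      show |(g x)⁻¹| ≤ _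
      rw [abs_inv]
      have hle : |g x|⁻¹ ≤ c⁻¹ := inv_anti₀ hc (hcg x hx)
      rw [hAinv]
      simpa [hM0] using hle
    · have hxV := hKV hx
      set L := cl α with hL_def
      have hLlen : L.length = k := by rw [hL_def, length_cl, hα]
      have hLne : L ≠ [] := by
        intro hnil
        rw [hnil] at hLlen
        simp at hLlen
        omega
      have hgh1 : Set.EqOn (fun y => g y * h y) (fun _ => (1:ℝ)) V :=
        fun y hy => mul_inv_cancel₀ (hnz y hy)
      have e0 : DL L (fun y => g y * h y) x = 0 := by
        rw [DL_congr hV hgh1 L hxV, DL_one L hLne]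
      have e3 := leibniz hV hg.1 hsmooth L x hxV
      have esplit : ((splits L).map fun s => DL s.1 g x * DL s.2 h x).sum
          = g x * pderM α h x
            + ((splits L).map fun s => if s.1 = [] then 0 else DL s.1 g x * DL s.2 h x).sum := by
        have e4 : ∀ s ∈ splits L, DL s.1 g x * DL s.2 h x
            = (if s.1 = [] then DL s.1 g x * DL s.2 h x else 0)
              + (if s.1 = [] then 0 else DL s.1 g x * DL s.2 h x) := by
          intro s _
          by_cases hs : s.1 = [] <;> simp [hs]
        rw [List.map_congr_left e4, List.sum_map_add]
        have e5 := splits_sum_nilterm L (fun s => DL s.1 g x * DL s.2 h x)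
        rw [e5]
        rw [pderM_eq_DL, ← hL_def]
        rfl
      have e6 : g x * pderM α h x
          = - ((splits L).map fun s => if s.1 = [] then 0 else DL s.1 g x * DL s.2 h x).sum := by
        rw [e0] at e3
        linarith [e3.trans esplit]
      set w : ℕ → ℝ := fun j => if j = 0 then 0 else
        C * ρ^j * (j.factorial : ℝ) * M j * (A * B^(k-j) * ((k-j).factorial : ℝ) * M (k-j)) with hw
      have hbound : ∀ s ∈ splits L,
          |if s.1 = [] then 0 else DL s.1 g x * DL s.2 h x| ≤ w s.1.length := by
        intro s hs
        obtain ⟨hlen, hsub1, hsub2⟩ := splits_mem L s hs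
        by_cases hnil : s.1 = []
        · simp [hnil, hw]
        · rw [if_neg hnil]
          have hj1 : 1 ≤ s.1.length := List.length_pos_iff.mpr hnil
          have hjk : s.1.length ≤ k := by
            rw [hLlen] at hlen; omega
          have hb2 : s.2.length = k - s.1.length := by
            rw [hLlen] at hlen; omega
          have hDL1 : DL s.1 g = pderM (fun i => s.1.count i) g := by
            rw [pderM_eq_DL, ← sublist_cl_eq hsub1]
          have hDL2 : DL s.2 h = pderM (fun i => s.2.count i) h := by
            rw [pderM_eq_DL, ← sublist_cl_eq hsub2]
          have hg1 : |DL s.1 g x| ≤ C * ρ^(s.1.length) * ((s.1.length).factorial : ℝ) * M (s.1.length) := by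
            rw [hDL1]
            have := hC x hx (fun i => s.1.count i)
            rwa [mdeg_count] at this
          have hh1 : |DL s.2 h x| ≤ A * B^(k - s.1.length) * (((k - s.1.length).factorial : ℝ)) * M (k - s.1.length) := by
            rw [hDL2, ← hb2]
            exact IH s.2.length (by omega) (fun i => s.2.count i) (mdeg_count s.2) x hx
          have hjne : s.1.length ≠ 0 := by omega
          simp only [hw]
          rw [if_neg hjne, abs_mul]
          have hnn1 : (0:ℝ) ≤ C * ρ^(s.1.length) * ((s.1.length).factorial : ℝ) * M (s.1.length) := by
            have := hMpos s.1.length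
            positivity
          exact mul_le_mul hg1 hh1 (abs_nonneg _) hnn1
      have habs : |((splits L).map fun s => if s.1 = [] then 0 else DL s.1 g x * DL s.2 h x).sum|
          ≤ ((splits L).map fun s => w s.1.length).sum :=
        list_abs_sum_le _ _ _ hbound
      have hws := splits_sum_weight L w
      rw [hLlen] at hws
      rw [hws] at habs
      have hsum : ∑ j ∈ Finset.range (k+1), (k.choose j : ℝ) * w j
          ≤ C * A * (k.factorial : ℝ) * M k * ρ * B^(k-1) * 2 := by
        rw [Finset.sum_range_succ' (fun j => (k.choose j : ℝ) * w j) k]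
        have hw0 : w 0 = 0 := by simp [hw]
        rw [hw0, mul_zero, add_zero]
        have hterm : ∀ j ∈ Finset.range k, (k.choose (j+1) : ℝ) * w (j+1)
            ≤ (C * A * (k.factorial : ℝ) * M k * ρ * B^(k-1)) * (1/2)^j := by
          intro j hj
          rw [Finset.mem_range] at hj
          have hj1k : j + 1 ≤ k := hj
          have hfac : (k.choose (j+1) : ℝ) * ((j+1).factorial : ℝ) * ((k-(j+1)).factorial : ℝ)
              = (k.factorial : ℝ) := by
            rw [← Nat.cast_mul, ← Nat.cast_mul, Nat.choose_mul_factorial_mul_factorial hj1k]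
          have hMM : M (j+1) * M (k-(j+1)) ≤ M k := by
            have := M_superadd hM (j+1) (k-(j+1))
            rwa [Nat.add_sub_cancel' hj1k] at this
          have hpow : ρ^(j+1) * B^(k-(j+1)) ≤ ρ * B^(k-1) * (1/2)^j := by
            have hρB : ρ ≤ B/2 := by linarith [hB2ρ]
            have h1 : ρ^(j+1) ≤ ρ * (B/2)^j := by
              rw [pow_succ']
              have : ρ^j ≤ (B/2)^j := pow_le_pow_left₀ hρ.le hρB j
              nlinarith [pow_nonneg hρ.le j]
            have h2 : (B/2)^j * B^(k-(j+1)) = B^(k-1) * (1/2)^j := by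
              rw [div_pow, div_eq_mul_inv]
              rw [show ((2:ℝ)^j)⁻¹ = (1/2:ℝ)^j by rw [one_div, inv_pow]]
              rw [show k - 1 = j + (k - (j+1)) by omega, pow_add]
              ring
            calc ρ^(j+1) * B^(k-(j+1)) ≤ (ρ * (B/2)^j) * B^(k-(j+1)) := by
                  apply mul_le_mul_of_nonneg_right h1 (pow_nonneg hBpos.le _)
              _ = ρ * ((B/2)^j * B^(k-(j+1))) := by ring
              _ = ρ * (B^(k-1) * (1/2)^j) := by rw [h2]
              _ = ρ * B^(k-1) * (1/2)^j := by ring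
          have hexp : (k.choose (j+1) : ℝ) * w (j+1)
              = (C * A) * ((k.choose (j+1) : ℝ) * ((j+1).factorial : ℝ) * ((k-(j+1)).factorial : ℝ))
                * (M (j+1) * M (k-(j+1))) * (ρ^(j+1) * B^(k-(j+1))) := by
            simp only [hw]
            rw [if_neg (by omega : j + 1 ≠ 0)]
            ring
          rw [hexp, hfac]
          have h3 : (0:ℝ) ≤ C * A := by positivity
          have h4 : (0:ℝ) ≤ (k.factorial : ℝ) := by positivity
          calc (C * A) * (k.factorial : ℝ) * (M (j+1) * M (k-(j+1))) * (ρ^(j+1) * B^(k-(j+1)))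
              ≤ (C * A) * (k.factorial : ℝ) * M k * (ρ * B^(k-1) * (1/2)^j) := by
                apply mul_le_mul
                · apply mul_le_mul_of_nonneg_left hMM (by positivity)
                · exact hpow
                · positivity
                · have := hMpos k; positivity
            _ = (C * A * (k.factorial : ℝ) * M k * ρ * B^(k-1)) * (1/2)^j := by ring
        calc ∑ j ∈ Finset.range k, (k.choose (j+1) : ℝ) * w (j+1)
            ≤ ∑ j ∈ Finset.range k, (C * A * (k.factorial : ℝ) * M k * ρ * B^(k-1)) * (1/2)^j :=
              Finset.sum_le_sum hterm
          _ = (C * A * (k.factorial : ℝ) * M k * ρ * B^(k-1)) * ∑ j ∈ Finset.range k, (1/2:ℝ)^j := by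
              rw [← Finset.mul_sum]
          _ ≤ (C * A * (k.factorial : ℝ) * M k * ρ * B^(k-1)) * 2 := by
              apply mul_le_mul_of_nonneg_left (sum_geometric_two_le k)
              have := hMpos k; positivity
          _ = C * A * (k.factorial : ℝ) * M k * ρ * B^(k-1) * 2 := by ring
      -- combine everything
      have hgp : |g x| * |pderM α h x|
          ≤ C * A * (k.factorial : ℝ) * M k * ρ * B^(k-1) * 2 := by
        rw [← abs_mul, e6, abs_neg]
        exact habs.trans hsum
      have hgx : c ≤ |g x| := hcg x hx
      have hp_nonneg : (0:ℝ) ≤ |pderM α h x| := abs_nonneg _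
      have hcp : c * |pderM α h x| ≤ C * A * (k.factorial : ℝ) * M k * ρ * B^(k-1) * 2 :=
        le_trans (mul_le_mul_of_nonneg_right hgx hp_nonneg) hgp
      -- now use 2*ρ*C/c ≤ B
      have hBk : B^k = B * B^(k-1) := by
        rw [← pow_succ']
        congr 1
        omega
      have hfinal : C * A * (k.factorial : ℝ) * M k * ρ * B^(k-1) * 2
          ≤ c * (A * B^k * (k.factorial : ℝ) * M k) := by
        have hMk := hMpos k
        have hfk : (0:ℝ) < (k.factorial : ℝ) := by positivity
        calc C * A * (k.factorial : ℝ) * M k * ρ * B^(k-1) * 2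
            = (2 * ρ * C) * (A * (k.factorial : ℝ) * M k * B^(k-1)) := by ring
          _ ≤ (c * B) * (A * (k.factorial : ℝ) * M k * B^(k-1)) := by
              apply mul_le_mul_of_nonneg_right hstep
              positivity
          _ = c * (A * B^k * (k.factorial : ℝ) * M k) := by rw [hBk]; ring
      exact le_of_mul_le_mul_left (hcp.trans hfinal) hc
  exact ⟨B, hBpos, A, fun x hx α => key (mdeg α) α rfl x hx⟩

end AuxMain


/-- `A_m^{M}` is closed under reciprocals near a point where the function does
not vanish. -/
theorem statement15 (M : ℕ → ℝ) (hM : RegularWeightSeq M) (hQA : QAseq M)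
    (n m : ℕ) (hm : 1 ≤ m)
    (U : Set (Euc n)) (hU : IsOpen U) (hU0 : (0 : Euc n) ∈ U)
    (f : Euc n → ℝ) (hf : AClass M m U f) (hf0 : f 0 ≠ 0) :
    ∃ W : Set (Euc n), IsOpen W ∧ W ⊆ U ∧ (0 : Euc n) ∈ W ∧
      (∀ x ∈ W, f x ≠ 0) ∧ AClass M m W fun x => (f x)⁻¹ := by
  have hconts : ContinuousOn f U := hf.1.continuousOn
  refine ⟨U ∩ f ⁻¹' ({0}ᶜ),
    hconts.isOpen_inter_preimage hU isOpen_compl_singleton,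
    Set.inter_subset_left,
    ⟨hU0, by simpa using hf0⟩,
    fun x hx => by simpa using hx.2, ?_⟩
  have hWU : U ∩ f ⁻¹' ({0}ᶜ) ⊆ U := Set.inter_subset_left
  have hWnz : ∀ x ∈ U ∩ f ⁻¹' ({0}ᶜ), f x ≠ 0 := fun x hx => by simpa using hx.2
  refine ⟨(hf.1.mono hWU).inv hWnz, ?_⟩
  intro V p hVo hmap hcomp
  have hfp : Roumieu M V (f ∘ p) := hf.2 V p hVo (hmap.mono_right hWU) hcomp
  have hnz : ∀ x ∈ V, (f ∘ p) x ≠ 0 := fun x hx => hWnz (p x) (hmap hx)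
  exact roumieu_inv hM hVo hfp hnz
end

section
/- Let m < n be positive integers. Suppose p_1, …, p_n are functions defined on a neighborhood of 0 ∈ ℝᵐ of the form p_j(x) = x^{α_j} u_j(x) with u_j continuous and non-vanishing, where the multi-indices α_1, …, α_n ∈ ℕᵐ are all nonzero (so p(0) = 0) and the set {α_1, …, α_n} is totally ordered with respect to the componentwise partial order on ℕᵐ. Then there exist distinct indices i, j ∈ {1, …, n} with α_i ≤ α_j, a positive integer d, a constant C > 0, and a neighborhood L of 0 ∈ ℝᵐ such that |p_j(x)| ≤ C |p_i(x)| and |p_i(x)|^d ≤ C |p_j(x)| for all x ∈ L. -/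
open Filter Metric Set Asymptotics
open scoped BigOperators Topology NNReal

private lemma aux_prod_le {m : ℕ} (x : Fin m → ℝ) (hx : ∀ s, |x s| ≤ 1)
    (β γ : Fin m → ℕ) (h : ∀ s, β s ≤ γ s) :
    |∏ s, x s ^ γ s| ≤ |∏ s, x s ^ β s| := by
  rw [Finset.abs_prod, Finset.abs_prod]
  apply Finset.prod_le_prod
  · intro s _; positivity
  · intro s _
    rw [abs_pow, abs_pow]
    exact pow_le_pow_of_le_one (abs_nonneg _) (hx s) (h s)

private lemma aux_bounds {m : ℕ} (K : Set (Fin m → ℝ)) (hK : IsCompact K) (hne : K.Nonempty)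
    (v : (Fin m → ℝ) → ℝ) (hv : ContinuousOn v K) (h0 : ∀ x ∈ K, v x ≠ 0) :
    ∃ c1 c2 : ℝ, 0 < c1 ∧ 0 < c2 ∧ ∀ x ∈ K, c1 ≤ |v x| ∧ |v x| ≤ c2 := by
  obtain ⟨z, hzK, hz⟩ := hK.exists_isMinOn hne hv.abs
  obtain ⟨w, hwK, hw⟩ := hK.exists_isMaxOn hne hv.abs
  refine ⟨|v z|, |v w|, abs_pos.mpr (h0 z hzK), ?_, fun x hx => ⟨hz hx, hw hx⟩⟩
  exact lt_of_lt_of_le (abs_pos.mpr (h0 z hzK)) (hw hzK)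


/-- Comparison of normal crossings components: among `n > m` monomial-type
functions on ℝᵐ with totally ordered exponents vanishing at `0` there are two
that are mutually comparable up to a power. -/
theorem statement18 (m n : ℕ) (hm : 0 < m) (hmn : m < n)
    (α : Fin n → Fin m → ℕ) (hα0 : ∀ j, α j ≠ 0)
    (htot : ∀ i j : Fin n, α i ≤ α j ∨ α j ≤ α i)
    (u : Fin n → (Fin m → ℝ) → ℝ)
    (W : Set (Fin m → ℝ)) (hW : W ∈ nhds (0 : Fin m → ℝ))
    (hu : ∀ j, ContinuousOn (u j) W) (hune : ∀ j, ∀ x ∈ W, u j x ≠ 0) :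
    ∃ i j : Fin n, i ≠ j ∧ α i ≤ α j ∧
      ∃ d : ℕ, 0 < d ∧ ∃ C > (0 : ℝ), ∃ L ∈ nhds (0 : Fin m → ℝ), ∀ x ∈ L,
        |(∏ s, x s ^ α j s) * u j x| ≤ C * |(∏ s, x s ^ α i s) * u i x| ∧
        |(∏ s, x s ^ α i s) * u i x| ^ d ≤ C * |(∏ s, x s ^ α j s) * u j x| := by
  classical
  set S : Fin n → Finset (Fin m) := fun j => Finset.univ.filter (fun s => α j s ≠ 0) with hSdef
  have hcard1 : ∀ j, 1 ≤ (S j).card := by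
    intro j
    rw [Finset.one_le_card]
    obtain ⟨s, hs⟩ := Function.ne_iff.mp (hα0 j)
    exact ⟨s, by simp only [hSdef, Finset.mem_filter, Finset.mem_univ, true_and]; simpa using hs⟩
  have hcardm : ∀ j, (S j).card ≤ m := fun j => (Finset.card_le_univ _).trans (by simp)
  have hmono : ∀ a b : Fin n, α a ≤ α b → S a ⊆ S b := by
    intro a b hab s hs
    simp only [hSdef, Finset.mem_filter, Finset.mem_univ, true_and] at hs ⊢
    intro h
    exact hs (Nat.le_antisymm (h ▸ hab s) (Nat.zero_le _))
  obtain ⟨i0, j0, hne0, heq0⟩ := Fintype.exists_ne_map_eq_of_card_lt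
    (fun j => (⟨(S j).card - 1, by have := hcard1 j; have := hcardm j; omega⟩ : Fin m))
    (by simpa using hmn)
  have hcardeq : (S i0).card = (S j0).card := by
    have h := congrArg Fin.val heq0
    simp only at h
    have := hcard1 i0; have := hcard1 j0; omega
  obtain ⟨i, j, hij, hle, hScard⟩ : ∃ i j : Fin n, i ≠ j ∧ α i ≤ α j ∧ (S j).card ≤ (S i).card := by
    rcases htot i0 j0 with h | h
    · exact ⟨i0, j0, hne0, h, hcardeq.ge⟩
    · exact ⟨j0, i0, hne0.symm, h, hcardeq.le⟩
  have hSeq : S i = S j := Finset.eq_of_subset_of_card_le (hmono i j hle) hScard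
  refine ⟨i, j, hij, hle, ?_⟩
  set d : ℕ := ∑ s, α j s with hddef
  have hd : 0 < d := by
    by_contra h
    apply hα0 j
    funext s
    have : ∀ s ∈ Finset.univ, α j s = 0 := by
      intro s _
      have := Finset.single_le_sum (f := α j) (fun t _ => Nat.zero_le _) (Finset.mem_univ s)
      omega
    exact this s (Finset.mem_univ s)
  have hdge : ∀ s, α j s ≤ d * α i s := by
    intro s
    by_cases h0 : α i s = 0
    · have hsi : s ∉ S i := by simp [hSdef, h0]
      rw [hSeq] at hsi
      simp only [hSdef, Finset.mem_filter, Finset.mem_univ, true_and, not_not] at hsi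
      simp [hsi]
    · have h1 : 1 ≤ α i s := Nat.one_le_iff_ne_zero.mpr h0
      have h2 : α j s ≤ d := Finset.single_le_sum (fun t _ => Nat.zero_le _) (Finset.mem_univ s)
      calc α j s ≤ d := h2
        _ = d * 1 := (mul_one d).symm
        _ ≤ d * α i s := Nat.mul_le_mul_left d h1
  -- neighborhood
  obtain ⟨ε, hε, hball⟩ := Metric.mem_nhds_iff.mp hW
  set r : ℝ := min (ε / 2) 1 with hrdef
  have hr : 0 < r := lt_min (by linarith) one_pos
  have hr1 : r ≤ 1 := min_le_right _ _
  set K : Set (Fin m → ℝ) := Metric.closedBall 0 r with hKdef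
  have hKW : K ⊆ W := by
    refine subset_trans ?_ hball
    exact Metric.closedBall_subset_ball (lt_of_le_of_lt (min_le_left _ _) (by linarith))
  have hKcpt : IsCompact K := isCompact_closedBall 0 r
  have hKne : K.Nonempty := ⟨0, Metric.mem_closedBall_self hr.le⟩
  obtain ⟨ci1, ci2, hci1, hci2, hci⟩ := aux_bounds K hKcpt hKne (u i)
    ((hu i).mono hKW) (fun x hx => hune i x (hKW hx))
  obtain ⟨cj1, cj2, hcj1, hcj2, hcj⟩ := aux_bounds K hKcpt hKne (u j)
    ((hu j).mono hKW) (fun x hx => hune j x (hKW hx))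
  set C : ℝ := max (cj2 / ci1) (ci2 ^ d / cj1) with hCdef
  have hC : 0 < C := lt_of_lt_of_le (div_pos hcj2 hci1) (le_max_left _ _)
  refine ⟨d, hd, C, hC, K, Metric.closedBall_mem_nhds 0 hr, ?_⟩
  intro x hxK
  have hx1 : ∀ s, |x s| ≤ 1 := by
    intro s
    have h1 : ‖x‖ ≤ r := by simpa [hKdef, dist_eq_norm] using hxK
    calc |x s| = ‖x s‖ := rfl
      _ ≤ ‖x‖ := norm_le_pi_norm x s
      _ ≤ 1 := h1.trans hr1
  set A : ℝ := |∏ s, x s ^ α i s| with hAdef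
  set B : ℝ := |∏ s, x s ^ α j s| with hBdef
  have hA0 : 0 ≤ A := abs_nonneg _
  have hB0 : 0 ≤ B := abs_nonneg _
  have hBA : B ≤ A := aux_prod_le x hx1 (α i) (α j) hle
  have hAdB : A ^ d ≤ B := by
    have h1 : A ^ d = |∏ s, x s ^ (d * α i s)| := by
      rw [← abs_pow, ← Finset.prod_pow]
      congr 1
      exact Finset.prod_congr rfl (fun s _ => by rw [← pow_mul, mul_comm])
    rw [h1]
    exact aux_prod_le x hx1 (α j) (fun s => d * α i s) hdge
  obtain ⟨hui1, hui2⟩ := hci x hxK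
  obtain ⟨huj1, huj2⟩ := hcj x hxK
  constructor
  · rw [abs_mul, abs_mul]
    calc B * |u j x| ≤ A * cj2 :=
          mul_le_mul hBA huj2 (abs_nonneg _) hA0
      _ = (cj2 / ci1) * (A * ci1) := by field_simp
      _ ≤ (cj2 / ci1) * (A * |u i x|) := by
          apply mul_le_mul_of_nonneg_left (mul_le_mul_of_nonneg_left hui1 hA0)
          positivity
      _ ≤ C * (A * |u i x|) := by
          apply mul_le_mul_of_nonneg_right (le_max_left _ _)
          positivity
  · rw [abs_mul, abs_mul, mul_pow]
    calc A ^ d * |u i x| ^ d ≤ B * ci2 ^ d := by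
          apply mul_le_mul hAdB (pow_le_pow_left₀ (abs_nonneg _) hui2 d) (by positivity) hB0
      _ = (ci2 ^ d / cj1) * (B * cj1) := by field_simp
      _ ≤ (ci2 ^ d / cj1) * (B * |u j x|) := by
          apply mul_le_mul_of_nonneg_left (mul_le_mul_of_nonneg_left huj1 hB0)
          positivity
      _ ≤ C * (B * |u j x|) := by
          apply mul_le_mul_of_nonneg_right (le_max_right _ _)
          positivity
end
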